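/- arXiv:1404.6786 — 11 statements merged into one kernel-verified Lean document; each statement's English description precedes it below -/
import Mathlib

section
/- Let M_s be an exact median of the seller's value v_s. Then the expected welfare of the fixed-price mechanism with trade price M_s (the Median Mechanism) is at least half the optimal welfare: E[W_{M_s}] ≥ (1/2)·E[max(v_s, v_b)]. -/
/-!
By independence it suffices to prove, for every fixed buyer value `y ≥ 0`, that
`E[max(v_s, y)] ≤ 2 E[W_M(v_s, y)]`, where `M` is the seller's median. If `y ≥ M`, trade happens
exactly when `v_s ≤ M`, i.e. with probability `1 / 2`, so `E[W_M] = E[v_s; v_s > M] + y / 2`,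
while `max(v_s, y) ≤ v_s 1{v_s > M} + y`. If `y < M` there is no trade and `E[W_M] = E[v_s]`,
while `E[max(v_s, y)] ≤ E[v_s] + y / 2 < E[v_s] + M / 2 ≤ 2 E[v_s]`, the last step by Markov's
inequality for `P(v_s ≥ M) = 1 / 2`.
-/

open MeasureTheory ProbabilityTheory Function

section

variable {Ω α β E : Type*} [MeasurableSpace Ω] [MeasurableSpace α] [MeasurableSpace β]
  [NormedAddCommGroup E] {μ : Measure Ω} {X : Ω → α} {Y : Ω → β}

theorem integral_map_of_stronglyMeasurable_uncurry [NormedSpace ℝ E] {F : α → β → E}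
    (hX : AEMeasurable X μ) (hF : StronglyMeasurable (uncurry F)) (y : β) :
    ∫ x, F x y ∂μ.map X = ∫ ω, F (X ω) y ∂μ :=
  integral_map hX (hF.comp_measurable measurable_prodMk_right).aestronglyMeasurable

namespace ProbabilityTheory

variable [IsFiniteMeasure μ]

theorem IndepFun.integrable_uncurry_prod_map {F : α → β → E} (hXY : IndepFun X Y μ)
    (hX : AEMeasurable X μ) (hY : AEMeasurable Y μ) (hF : StronglyMeasurable (uncurry F))
    (hFi : Integrable (fun ω ↦ F (X ω) (Y ω)) μ) :
    Integrable (uncurry F) ((μ.map X).prod (μ.map Y)) := by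
  rw [← (indepFun_iff_map_prod_eq_prod_map_map hX hY).1 hXY]
  exact (integrable_map_measure hF.aestronglyMeasurable (hX.prodMk hY)).2 hFi

variable [NormedSpace ℝ E]

theorem IndepFun.integrable_integral_comp_map {F : α → β → E} (hXY : IndepFun X Y μ)
    (hX : AEMeasurable X μ) (hY : AEMeasurable Y μ) (hF : StronglyMeasurable (uncurry F))
    (hFi : Integrable (fun ω ↦ F (X ω) (Y ω)) μ) :
    Integrable (fun y ↦ ∫ ω, F (X ω) y ∂μ) (μ.map Y) := by
  have h := (hXY.integrable_uncurry_prod_map hX hY hF hFi).integral_prod_right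
  simpa only [uncurry_apply_pair, integral_map_of_stronglyMeasurable_uncurry hX hF] using h

theorem IndepFun.integral_comp_eq_integral_integral_comp {F : α → β → E} (hXY : IndepFun X Y μ)
    (hX : AEMeasurable X μ) (hY : AEMeasurable Y μ) (hF : StronglyMeasurable (uncurry F))
    (hFi : Integrable (fun ω ↦ F (X ω) (Y ω)) μ) :
    ∫ ω, F (X ω) (Y ω) ∂μ = ∫ ω', ∫ ω, F (X ω) (Y ω') ∂μ ∂μ := by
  calc ∫ ω, F (X ω) (Y ω) ∂μ = ∫ z, uncurry F z ∂μ.map fun ω ↦ (X ω, Y ω) :=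
        (integral_map (hX.prodMk hY) hF.aestronglyMeasurable).symm
    _ = ∫ y, ∫ ω, F (X ω) y ∂μ ∂μ.map Y := by
        rw [(indepFun_iff_map_prod_eq_prod_map_map hX hY).1 hXY,
          integral_prod_symm _ (hXY.integrable_uncurry_prod_map hX hY hF hFi)]
        simp only [uncurry_apply_pair, integral_map_of_stronglyMeasurable_uncurry hX hF]
    _ = ∫ ω', ∫ ω, F (X ω) (Y ω') ∂μ ∂μ :=
        integral_map hY (hXY.integrable_integral_comp_map hX hY hF hFi).aestronglyMeasurable

theorem IndepFun.integral_comp_le_integral_comp {F G : α → β → ℝ} (hXY : IndepFun X Y μ)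
    (hX : AEMeasurable X μ) (hY : AEMeasurable Y μ)
    (hF : StronglyMeasurable (uncurry F)) (hG : StronglyMeasurable (uncurry G))
    (hFi : Integrable (fun ω ↦ F (X ω) (Y ω)) μ) (hGi : Integrable (fun ω ↦ G (X ω) (Y ω)) μ)
    (hFG : ∀ᵐ ω' ∂μ, ∫ ω, F (X ω) (Y ω') ∂μ ≤ ∫ ω, G (X ω) (Y ω') ∂μ) :
    ∫ ω, F (X ω) (Y ω) ∂μ ≤ ∫ ω, G (X ω) (Y ω) ∂μ := by
  rw [hXY.integral_comp_eq_integral_integral_comp hX hY hF hFi,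
    hXY.integral_comp_eq_integral_integral_comp hX hY hG hGi]
  exact integral_mono_ae ((hXY.integrable_integral_comp_map hX hY hF hFi).comp_aemeasurable hY)
    ((hXY.integrable_integral_comp_map hX hY hG hGi).comp_aemeasurable hY) hFG

end ProbabilityTheory

noncomputable def fixedPriceWelfare (p x y : ℝ) : ℝ := if x ≤ p ∧ p ≤ y then y else x

theorem measurable_fixedPriceWelfare (p : ℝ) : Measurable (uncurry (fixedPriceWelfare p)) :=
  Measurable.ite ((measurableSet_le measurable_fst measurable_const).inter
    (measurableSet_le measurable_const measurable_snd)) measurable_snd measurable_fst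

theorem abs_fixedPriceWelfare_le (p x y : ℝ) : |fixedPriceWelfare p x y| ≤ |x| + |y| := by
  unfold fixedPriceWelfare
  split_ifs <;> linarith [abs_nonneg x, abs_nonneg y]

theorem integrable_fixedPriceWelfare_comp {X Y : Ω → ℝ} (hX : Integrable X μ)
    (hY : Integrable Y μ) (p : ℝ) : Integrable (fun ω ↦ fixedPriceWelfare p (X ω) (Y ω)) μ :=
  (hX.abs.add hY.abs).mono'
    ((measurable_fixedPriceWelfare p).comp_aemeasurable
      (hX.aemeasurable.prodMk hY.aemeasurable)).aestronglyMeasurable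
    (Filter.Eventually.of_forall fun ω ↦ abs_fixedPriceWelfare_le p (X ω) (Y ω))

section ConstantBuyer

variable [IsProbabilityMeasure μ] {X : Ω → ℝ} {M y : ℝ}

theorem integral_max_const_le_two_mul_integral_fixedPriceWelfare_of_le (hX : Measurable X)
    (hX_nonneg : 0 ≤ᵐ[μ] X) (hX_int : Integrable X μ) (hle : μ.real {ω | X ω ≤ M} = 1 / 2)
    (hy : 0 ≤ y) (hMy : M ≤ y) :
    ∫ ω, max (X ω) y ∂μ ≤ 2 * ∫ ω, fixedPriceWelfare M (X ω) y ∂μ := by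
  set A := {ω | X ω ≤ M}
  have hA : MeasurableSet A := hX measurableSet_Iic
  have hind_int : Integrable (A.indicator fun _ ↦ y) μ := (integrable_const y).indicator hA
  have hmax_int : Integrable (fun ω ↦ max (X ω) y) μ := hX_int.sup (integrable_const y)
  have hW_int := integrable_fixedPriceWelfare_comp hX_int (integrable_const y) M
  -- trade happens exactly on `A`, which has probability `1 / 2`
  have hpt : ∀ᵐ ω ∂μ, max (X ω) y + 2 * A.indicator (fun _ ↦ y) ω
      ≤ 2 * fixedPriceWelfare M (X ω) y + y := by
    filter_upwards [hX_nonneg] with ω hω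
    simp only [fixedPriceWelfare, Set.indicator_apply, A, Set.mem_ofPred_eq, hMy, and_true]
    split_ifs <;> simp only [Pi.zero_apply] at hω <;> cases max_cases (X ω) y <;> linarith
  have h := integral_mono_ae (f := fun ω ↦ max (X ω) y + 2 * A.indicator (fun _ ↦ y) ω)
    (g := fun ω ↦ 2 * fixedPriceWelfare M (X ω) y + y)
    (hmax_int.add (hind_int.const_mul 2))
    ((hW_int.const_mul 2).add (integrable_const y)) hpt
  rw [integral_add hmax_int (hind_int.const_mul 2),
    integral_add (hW_int.const_mul 2) (integrable_const y), integral_const_mul,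
    integral_const_mul, integral_indicator_const y hA, hle, integral_const, probReal_univ,
    smul_eq_mul, one_smul] at h
  linarith

theorem integral_max_const_le_two_mul_integral_fixedPriceWelfare_of_lt (hX : Measurable X)
    (hX_nonneg : 0 ≤ᵐ[μ] X) (hX_int : Integrable X μ) (hle : μ.real {ω | X ω ≤ M} = 1 / 2)
    (hge : μ.real {ω | M ≤ X ω} = 1 / 2) (hy : 0 ≤ y) (hyM : y < M) :
    ∫ ω, max (X ω) y ∂μ ≤ 2 * ∫ ω, fixedPriceWelfare M (X ω) y ∂μ := by
  set A := {ω | X ω ≤ M}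
  have hA : MeasurableSet A := hX measurableSet_Iic
  have hind_int : Integrable (A.indicator fun _ ↦ y) μ := (integrable_const y).indicator hA
  have hmax_int : Integrable (fun ω ↦ max (X ω) y) μ := hX_int.sup (integrable_const y)
  have hW : ∫ ω, fixedPriceWelfare M (X ω) y ∂μ = ∫ ω, X ω ∂μ := by
    simp only [fixedPriceWelfare, hyM.not_ge, and_false, if_false]
  have hpt : ∀ᵐ ω ∂μ, max (X ω) y ≤ X ω + A.indicator (fun _ ↦ y) ω := by
    filter_upwards [hX_nonneg] with ω hω
    simp only [Set.indicator_apply, A, Set.mem_ofPred_eq]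
    split_ifs <;> simp only [Pi.zero_apply] at hω <;> cases max_cases (X ω) y <;> linarith
  have h := integral_mono_ae (g := fun ω ↦ X ω + A.indicator (fun _ ↦ y) ω)
    hmax_int (hX_int.add hind_int) hpt
  rw [integral_add hX_int hind_int, integral_indicator_const y hA, hle, smul_eq_mul] at h
  have hmarkov := mul_meas_ge_le_integral_of_nonneg hX_nonneg hX_int M
  rw [hge] at hmarkov
  linarith

theorem integral_max_const_le_two_mul_integral_fixedPriceWelfare (hX : Measurable X)
    (hX_nonneg : 0 ≤ᵐ[μ] X) (hX_int : Integrable X μ) (hle : μ.real {ω | X ω ≤ M} = 1 / 2)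
    (hge : μ.real {ω | M ≤ X ω} = 1 / 2) (hy : 0 ≤ y) :
    ∫ ω, max (X ω) y ∂μ ≤ 2 * ∫ ω, fixedPriceWelfare M (X ω) y ∂μ := by
  rcases le_or_gt M y with hMy | hyM
  · exact integral_max_const_le_two_mul_integral_fixedPriceWelfare_of_le hX hX_nonneg hX_int hle
      hy hMy
  · exact integral_max_const_le_two_mul_integral_fixedPriceWelfare_of_lt hX hX_nonneg hX_int hle
      hge hy hyM

end ConstantBuyer

end

/-- The Median Mechanism for bilateral trade is a 2-approximation to the optimal
expected welfare: posting the seller's median `Ms` as trade price yields expected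
welfare at least half of `E[max(v_s, v_b)]`. -/
theorem median_mechanism_two_approximation
    {Ω : Type*} [MeasurableSpace Ω] (μ : Measure Ω) [IsProbabilityMeasure μ]
    (vs vb : Ω → ℝ) (Ms : ℝ)
    (hmeas_s : Measurable vs) (hmeas_b : Measurable vb)
    (hindep : IndepFun vs vb μ)
    (hs_nonneg : ∀ ω, 0 ≤ vs ω) (hb_nonneg : ∀ ω, 0 ≤ vb ω)
    (hs_int : Integrable vs μ) (hb_int : Integrable vb μ)
    (hmed_le : μ {ω | vs ω ≤ Ms} = 1 / 2)
    (hmed_ge : μ {ω | Ms ≤ vs ω} = 1 / 2) :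
    (1 / 2) * ∫ ω, max (vs ω) (vb ω) ∂μ
      ≤ ∫ ω, (if vs ω ≤ Ms ∧ Ms ≤ vb ω then vb ω else vs ω) ∂μ := by
  have hle : μ.real {ω | vs ω ≤ Ms} = 1 / 2 := by simp [measureReal_def, hmed_le]
  have hge : μ.real {ω | Ms ≤ vs ω} = 1 / 2 := by simp [measureReal_def, hmed_ge]
  rw [← integral_const_mul]
  refine hindep.integral_comp_le_integral_comp (F := fun x y ↦ 1 / 2 * max x y)
    (G := fixedPriceWelfare Ms) hmeas_s.aemeasurable hmeas_b.aemeasurable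
    ((measurable_const.mul (measurable_fst.max measurable_snd)).stronglyMeasurable)
    (measurable_fixedPriceWelfare Ms).stronglyMeasurable
    ((hs_int.sup hb_int).const_mul _) (integrable_fixedPriceWelfare_comp hs_int hb_int Ms)
    (Filter.Eventually.of_forall fun ω' ↦ ?_)
  have h := integral_max_const_le_two_mul_integral_fixedPriceWelfare hmeas_s
    (Filter.Eventually.of_forall hs_nonneg) hs_int hle hge (hb_nonneg ω')
  rw [integral_const_mul]
  linarith
end

section
/- Let M_s be an exact median of the seller's value v_s, and let T1 be the event {v_b < M_s} (type-1 instances). Then the contribution of type-1 instances to the welfare of the Median Mechanism is at least half their contribution to the optimal welfare: E[W_{M_s}·1_{T1}] ≥ (1/2)·E[max(v_s, v_b)·1_{T1}]. -/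
/-!
On type-1 instances (`v_b < M`) the median mechanism never trades, so its welfare there is
`v_s`. Pointwise `max v_s v_b ≤ v_s + M · 1{v_s < M}` on this event, and by independence and
the median property `{v_s < M}` and `{v_s ≥ M}` each carry half of its mass. By Markov's
inequality the second half already contributes at least `M · P(v_s ≥ M, v_b < M)` to
`E[v_s ; v_b < M]`, which therefore dominates the correction term.
-/

open MeasureTheory ProbabilityTheory Set

section

variable {Ω : Type*} [MeasurableSpace Ω] {μ : Measure Ω}

lemma ProbabilityTheory.IndepFun.measure_inter_preimage_congr_left
    {β β' : Type*} [MeasurableSpace β] [MeasurableSpace β'] {X : Ω → β} {Y : Ω → β'}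
    (hXY : IndepFun X Y μ) {A A' : Set β} {B : Set β'}
    (hA : MeasurableSet A) (hA' : MeasurableSet A') (hB : MeasurableSet B)
    (hAA' : μ (X ⁻¹' A) = μ (X ⁻¹' A')) :
    μ (X ⁻¹' A ∩ Y ⁻¹' B) = μ (X ⁻¹' A' ∩ Y ⁻¹' B) := by
  rw [hXY.measure_inter_preimage_eq_mul _ _ hA hB,
    hXY.measure_inter_preimage_eq_mul _ _ hA' hB, hAA']

lemma measure_lt_eq_half_of_measure_ge_eq_half [IsProbabilityMeasure μ] {X : Ω → ℝ}
    (hX : Measurable X) {m : ℝ} (h : μ {ω | m ≤ X ω} = 1 / 2) :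
    μ {ω | X ω < m} = 1 / 2 := by
  have hcompl : {ω | X ω < m} = {ω | m ≤ X ω}ᶜ := by ext; simp
  rw [hcompl, prob_compl_eq_one_sub (s := {ω | m ≤ X ω}) (hX measurableSet_Ici), h, one_div, ENNReal.one_sub_inv_two]

lemma max_le_add_indicator_lt {a b m : ℝ} (ha : 0 ≤ a) (hb : b < m) :
    max a b ≤ a + {x : ℝ | x < m}.indicator (fun _ ↦ m) a := by
  by_cases ham : a < m
  · rw [indicator_of_mem (show a ∈ {x : ℝ | x < m} from ham)]
    exact max_le (by linarith) (by linarith)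
  · rw [indicator_of_notMem (show a ∉ {x : ℝ | x < m} from ham), add_zero]
    exact max_le le_rfl (by linarith [not_lt.1 ham])

lemma setIntegral_max_le_add_measureReal [IsFiniteMeasure μ] {X Y : Ω → ℝ}
    (hX : Measurable X) (hY : Measurable Y) (hX_nonneg : ∀ ω, 0 ≤ X ω)
    (hX_int : Integrable X μ) (hY_int : Integrable Y μ) (m : ℝ) :
    ∫ ω in {ω | Y ω < m}, max (X ω) (Y ω) ∂μ
      ≤ ∫ ω in {ω | Y ω < m}, X ω ∂μ + m * μ.real ({ω | X ω < m} ∩ {ω | Y ω < m}) := by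
  have hS : MeasurableSet {ω | X ω < m} := hX measurableSet_Iio
  have hT : MeasurableSet {ω | Y ω < m} := hY measurableSet_Iio
  have hcorr_int : Integrable ({ω | X ω < m}.indicator fun _ ↦ m) μ :=
    (integrable_const m).indicator hS
  calc ∫ ω in {ω | Y ω < m}, max (X ω) (Y ω) ∂μ
      ≤ ∫ ω in {ω | Y ω < m}, (X ω + ({ω | X ω < m}.indicator (fun _ ↦ m) ω)) ∂μ :=
        setIntegral_mono_on (hX_int.sup hY_int).integrableOn
          (hX_int.add hcorr_int).integrableOn hT
          fun ω hω ↦ max_le_add_indicator_lt (hX_nonneg ω) hω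
    _ = ∫ ω in {ω | Y ω < m}, X ω ∂μ + m * μ.real ({ω | X ω < m} ∩ {ω | Y ω < m}) := by
        rw [integral_add hX_int.integrableOn hcorr_int.integrableOn, setIntegral_indicator hS,
          setIntegral_const, inter_comm, smul_eq_mul, mul_comm]

lemma mul_measureReal_inter_le_setIntegral {f : Ω → ℝ} (hf : Measurable f)
    (hf_nonneg : ∀ ω, 0 ≤ f ω) (hf_int : Integrable f μ) (m : ℝ) (T : Set Ω) :
    m * μ.real ({ω | m ≤ f ω} ∩ T) ≤ ∫ ω in T, f ω ∂μ := by
  rw [← measureReal_restrict_apply (t := {ω | m ≤ f ω}) (hf measurableSet_Ici)]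
  exact mul_meas_ge_le_integral_of_nonneg (ae_of_all _ hf_nonneg) hf_int.integrableOn m

end

theorem median_mechanism_type_one_instances_general
    {Ω : Type*} [MeasurableSpace Ω] (μ : Measure Ω) [IsProbabilityMeasure μ]
    (vs vb : Ω → ℝ) (Ms : ℝ)
    (hmeas_s : Measurable vs) (hmeas_b : Measurable vb)
    (hindep : IndepFun vs vb μ)
    (hs_nonneg : ∀ ω, 0 ≤ vs ω)
    (hs_int : Integrable vs μ) (hb_int : Integrable vb μ)
    (hmed_ge : μ {ω | Ms ≤ vs ω} = 1 / 2) :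
    (1 / 2) * ∫ ω in {ω | vb ω < Ms}, max (vs ω) (vb ω) ∂μ
      ≤ ∫ ω in {ω | vb ω < Ms}, (if vs ω ≤ Ms ∧ Ms ≤ vb ω then vb ω else vs ω) ∂μ := by
  have hno_trade : ∫ ω in {ω | vb ω < Ms}, (if vs ω ≤ Ms ∧ Ms ≤ vb ω then vb ω else vs ω) ∂μ
      = ∫ ω in {ω | vb ω < Ms}, vs ω ∂μ :=
    setIntegral_congr_fun (hmeas_b measurableSet_Iio)
      fun ω hω ↦ if_neg fun h ↦ not_le.2 hω h.2
  have hhalves : μ.real ({ω | vs ω < Ms} ∩ {ω | vb ω < Ms})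
      = μ.real ({ω | Ms ≤ vs ω} ∩ {ω | vb ω < Ms}) := by
    simp only [measureReal_def]
    congr 1
    refine hindep.measure_inter_preimage_congr_left measurableSet_Iio measurableSet_Ici
      measurableSet_Iio ?_
    exact (measure_lt_eq_half_of_measure_ge_eq_half hmeas_s hmed_ge).trans hmed_ge.symm
  have hupper := setIntegral_max_le_add_measureReal hmeas_s hmeas_b hs_nonneg hs_int hb_int Ms
  rw [hhalves] at hupper
  rw [hno_trade]
  linarith [mul_measureReal_inter_le_setIntegral hmeas_s hs_nonneg hs_int Ms {ω | vb ω < Ms}]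

/-- Type-1 instances of bilateral trade are those with `v_b < Ms`. The contribution of
type-1 instances to the expected welfare of the Median Mechanism (trade price equal to
the seller's median `Ms`) is at least half of their contribution to the optimal
expected welfare. -/
theorem median_mechanism_type_one_instances
    {Ω : Type*} [MeasurableSpace Ω] (μ : Measure Ω) [IsProbabilityMeasure μ]
    (vs vb : Ω → ℝ) (Ms : ℝ)
    (hmeas_s : Measurable vs) (hmeas_b : Measurable vb)
    (hindep : IndepFun vs vb μ)
    (hs_nonneg : ∀ ω, 0 ≤ vs ω) (hb_nonneg : ∀ ω, 0 ≤ vb ω)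
    (hs_int : Integrable vs μ) (hb_int : Integrable vb μ)
    (hmed_le : μ {ω | vs ω ≤ Ms} = 1 / 2)
    (hmed_ge : μ {ω | Ms ≤ vs ω} = 1 / 2) :
    (1 / 2) * ∫ ω in {ω | vb ω < Ms}, max (vs ω) (vb ω) ∂μ
      ≤ ∫ ω in {ω | vb ω < Ms}, (if vs ω ≤ Ms ∧ Ms ≤ vb ω then vb ω else vs ω) ∂μ :=
  median_mechanism_type_one_instances_general μ vs vb Ms hmeas_s hmeas_b hindep hs_nonneg hs_int
    hb_int hmed_ge
end

section
/- Let M_s be an exact median of the seller's value v_s, and let T2 be the event {v_b ≥ M_s} (type-2 instances). Then the contribution of type-2 instances to the welfare of the Median Mechanism is at least half their contribution to the optimal welfare: E[W_{M_s}·1_{T2}] ≥ (1/2)·E[max(v_s, v_b)·1_{T2}]. -/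
/-!
On `{Ms ≤ v_b}` the Median Mechanism trades exactly when `v_s ≤ Ms`, so its welfare there is
`∫_{v_s ≤ Ms} v_b + ∫_{v_s > Ms} v_s`, while `max v_s v_b ≤ v_b + v_s 1_{v_s > Ms}`. By
independence and the median property, the first term is exactly half of `∫ v_b` over
`{Ms ≤ v_b}`.
-/

open MeasureTheory ProbabilityTheory

theorem ProbabilityTheory.IndepFun.setIntegral_preimage_inter_preimage
    {Ω α β : Type*} [MeasurableSpace Ω] [MeasurableSpace α] [MeasurableSpace β]
    {μ : Measure Ω} {X : Ω → α} {Y : Ω → β} (hXY : IndepFun X Y μ)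
    (hX : Measurable X) (hY : Measurable Y) {S : Set α} {T : Set β}
    (hS : MeasurableSet S) (hT : MeasurableSet T) {g : β → ℝ} (hg : Measurable g) :
    ∫ ω in Y ⁻¹' T ∩ X ⁻¹' S, g (Y ω) ∂μ
      = μ.real (X ⁻¹' S) * ∫ ω in Y ⁻¹' T, g (Y ω) ∂μ := by
  have h1S : Measurable (S.indicator fun _ => (1 : ℝ)) := measurable_const.indicator hS
  have hgT : Measurable (T.indicator g) := hg.indicator hT
  have hprod : (Y ⁻¹' T ∩ X ⁻¹' S).indicator (fun ω => g (Y ω))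
      = (S.indicator fun _ => (1 : ℝ)) ∘ X * T.indicator g ∘ Y := by
    ext ω
    by_cases hωS : X ω ∈ S <;> by_cases hωT : Y ω ∈ T <;> simp [Set.indicator, hωS, hωT]
  rw [← integral_indicator ((hY hT).inter (hX hS)), hprod,
    (hXY.comp h1S hgT).integral_mul_eq_mul_integral (h1S.comp hX).aestronglyMeasurable
      (hgT.comp hY).aestronglyMeasurable,
    ← integral_indicator_one (hX hS), ← integral_indicator (hY hT)]
  rfl

section FixedPrice

variable {Ω : Type*} [MeasurableSpace Ω] {μ : Measure Ω} {vs vb : Ω → ℝ} {p : ℝ}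

theorem setIntegral_fixedPriceWelfare_of_price_le_buyer (hs : Measurable vs) (hb : Measurable vb)
    (hs_int : Integrable vs μ) (hb_int : Integrable vb μ) :
    ∫ ω in {ω | p ≤ vb ω}, (if vs ω ≤ p ∧ p ≤ vb ω then vb ω else vs ω) ∂μ
      = ∫ ω in {ω | p ≤ vb ω} ∩ {ω | vs ω ≤ p}, vb ω ∂μ
        + ∫ ω in {ω | p ≤ vb ω} \ {ω | vs ω ≤ p}, vs ω ∂μ := by
  have hA : MeasurableSet {ω | p ≤ vb ω} := measurableSet_le measurable_const hb
  have hL : MeasurableSet {ω | vs ω ≤ p} := measurableSet_le hs measurable_const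
  have hW : Integrable (fun ω => if vs ω ≤ p ∧ p ≤ vb ω then vb ω else vs ω) μ :=
    Integrable.piecewise (s := {ω | vs ω ≤ p ∧ p ≤ vb ω})
      ((measurableSet_le hs measurable_const).inter (measurableSet_le measurable_const hb))
      hb_int.integrableOn hs_int.integrableOn
  rw [← integral_inter_add_sdiff hL hW.integrableOn]
  congr 1
  · exact setIntegral_congr_fun (hA.inter hL) fun ω ⟨hpb, hsp⟩ => if_pos ⟨hsp, hpb⟩
  · exact setIntegral_congr_fun (hA.diff hL) fun ω ⟨_, hsp⟩ => if_neg fun h => hsp h.1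

theorem setIntegral_max_le_of_price_le_buyer (hs : Measurable vs) (hb : Measurable vb)
    (hs_nonneg : ∀ ω, 0 ≤ vs ω) (hb_nonneg : ∀ ω, 0 ≤ vb ω)
    (hs_int : Integrable vs μ) (hb_int : Integrable vb μ) :
    ∫ ω in {ω | p ≤ vb ω}, max (vs ω) (vb ω) ∂μ
      ≤ ∫ ω in {ω | p ≤ vb ω}, vb ω ∂μ
        + ∫ ω in {ω | p ≤ vb ω} \ {ω | vs ω ≤ p}, vs ω ∂μ := by
  have hA : MeasurableSet {ω | p ≤ vb ω} := measurableSet_le measurable_const hb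
  have hL : MeasurableSet {ω | vs ω ≤ p} := measurableSet_le hs measurable_const
  have hsL : Integrable ({ω | vs ω ≤ p}ᶜ.indicator vs) μ := hs_int.indicator hL.compl
  rw [Set.sdiff_eq, ← setIntegral_indicator hL.compl,
    ← integral_add hb_int.integrableOn hsL.integrableOn]
  refine setIntegral_mono_on (hs_int.sup hb_int).integrableOn (hb_int.add hsL).integrableOn hA
    fun ω hpb => ?_
  by_cases hsp : vs ω ≤ p
  · simp [hsp, hsp.trans hpb]
  · simp only [Set.indicator_of_mem (show ω ∈ {ω | vs ω ≤ p}ᶜ from hsp)]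
    exact max_le (le_add_of_nonneg_left (hb_nonneg ω)) (le_add_of_nonneg_right (hs_nonneg ω))

end FixedPrice

theorem median_mechanism_type_two_instances_general
    {Ω : Type*} [MeasurableSpace Ω] (μ : Measure Ω)
    (vs vb : Ω → ℝ) (Ms : ℝ)
    (hmeas_s : Measurable vs) (hmeas_b : Measurable vb)
    (hindep : IndepFun vs vb μ)
    (hs_nonneg : ∀ ω, 0 ≤ vs ω) (hb_nonneg : ∀ ω, 0 ≤ vb ω)
    (hs_int : Integrable vs μ) (hb_int : Integrable vb μ)
    (hmed_le : μ {ω | vs ω ≤ Ms} = 1 / 2) :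
    (1 / 2) * ∫ ω in {ω | Ms ≤ vb ω}, max (vs ω) (vb ω) ∂μ
      ≤ ∫ ω in {ω | Ms ≤ vb ω}, (if vs ω ≤ Ms ∧ Ms ≤ vb ω then vb ω else vs ω) ∂μ := by
  have hhalf : ∫ ω in {ω | Ms ≤ vb ω} ∩ {ω | vs ω ≤ Ms}, vb ω ∂μ
      = 1 / 2 * ∫ ω in {ω | Ms ≤ vb ω}, vb ω ∂μ := by
    have h := hindep.setIntegral_preimage_inter_preimage hmeas_s hmeas_b
      (measurableSet_Iic (a := Ms)) (measurableSet_Ici (a := Ms)) (g := fun x => x) measurable_id'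
    rwa [measureReal_def, show vs ⁻¹' Set.Iic Ms = {ω | vs ω ≤ Ms} from rfl, hmed_le,
      ENNReal.toReal_div, ENNReal.toReal_one, ENNReal.toReal_ofNat] at h
  have hseller : 0 ≤ ∫ ω in {ω | Ms ≤ vb ω} \ {ω | vs ω ≤ Ms}, vs ω ∂μ :=
    integral_nonneg hs_nonneg
  linarith [setIntegral_max_le_of_price_le_buyer (μ := μ) (p := Ms) hmeas_s hmeas_b hs_nonneg
      hb_nonneg hs_int hb_int,
    setIntegral_fixedPriceWelfare_of_price_le_buyer (μ := μ) (p := Ms) hmeas_s hmeas_b hs_int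
      hb_int]

/-- Type-1 instances of bilateral trade are those with `v_b ≥ Ms`. The contribution of
type-2 instances to the expected welfare of the Median Mechanism (trade price equal to
the seller's median `Ms`) is at least half of their contribution to the optimal
expected welfare. -/
theorem median_mechanism_type_two_instances
    {Ω : Type*} [MeasurableSpace Ω] (μ : Measure Ω) [IsProbabilityMeasure μ]
    (vs vb : Ω → ℝ) (Ms : ℝ)
    (hmeas_s : Measurable vs) (hmeas_b : Measurable vb)
    (hindep : IndepFun vs vb μ)
    (hs_nonneg : ∀ ω, 0 ≤ vs ω) (hb_nonneg : ∀ ω, 0 ≤ vb ω)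
    (hs_int : Integrable vs μ) (hb_int : Integrable vb μ)
    (hmed_le : μ {ω | vs ω ≤ Ms} = 1 / 2)
    (hmed_ge : μ {ω | Ms ≤ vs ω} = 1 / 2) :
    (1 / 2) * ∫ ω in {ω | Ms ≤ vb ω}, max (vs ω) (vb ω) ∂μ
      ≤ ∫ ω in {ω | Ms ≤ vb ω}, (if vs ω ≤ Ms ∧ Ms ≤ vb ω then vb ω else vs ω) ∂μ :=
  median_mechanism_type_two_instances_general μ vs vb Ms hmeas_s hmeas_b hindep hs_nonneg hb_nonneg
    hs_int hb_int hmed_le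
end

section
/- Suppose v_s has an exact median M_s and v_b has an exact median M_b. Then there exists a trade price p ∈ ℝ such that E[W_p] ≥ (28/55)·E[max(v_s, v_b)]; that is, some fixed-price mechanism achieves a 55/28-approximation to the optimal welfare. -/
/-!
Write `a = E[v_s]`, `OPT = E[max(v_s, v_b)]`, `β(p) = E[(v_b - p)⁺]` and `σ(p) = E[(p - v_s)⁺]`.
By independence, the welfare at price `p` is `a + P(v_s ≤ p) β(p) + σ(p) P(p ≤ v_b)`, and pointwise
bounds on `max(v_s, v_b)` give upper bounds on `OPT` of the same shape. Suppose that every price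
achieves less than `28/55 · OPT`. The price `OPT/8`, together with Markov's inequality, forces
`OPT < 25 a`. If `M_s ≤ M_b`, the price `M_s` achieves at least `(a + OPT)/2 > 13/25 · OPT`. If
`M_b < M_s`, the prices `M_s`, `M_b` and `M_s + 4a` give polynomial inequalities in these quantities
that have no common solution.
-/

open MeasureTheory ProbabilityTheory Set

namespace BilateralTrade

variable {Ω : Type*} [MeasurableSpace Ω]

noncomputable def excess (μ : Measure Ω) (X : Ω → ℝ) (p : ℝ) : ℝ := ∫ ω, max (X ω - p) 0 ∂μ

noncomputable def deficit (μ : Measure Ω) (X : Ω → ℝ) (p : ℝ) : ℝ := ∫ ω, max (p - X ω) 0 ∂μ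

noncomputable def welfare (μ : Measure Ω) (vs vb : Ω → ℝ) (p : ℝ) : ℝ :=
  ∫ ω, (if vs ω ≤ p ∧ p ≤ vb ω then vb ω else vs ω) ∂μ

noncomputable def optimalWelfare (μ : Measure Ω) (vs vb : Ω → ℝ) : ℝ := ∫ ω, max (vs ω) (vb ω) ∂μ

section OneVariable

variable {μ : Measure Ω} {X : Ω → ℝ}

theorem excess_nonneg (p : ℝ) : 0 ≤ excess μ X p :=
  integral_nonneg fun _ => le_max_right _ _

theorem deficit_nonneg (p : ℝ) : 0 ≤ deficit μ X p :=
  integral_nonneg fun _ => le_max_right _ _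

theorem integral_indicator_Iic_comp (hX : Measurable X) (p : ℝ) :
    ∫ ω, (Iic p).indicator 1 (X ω) ∂μ = μ.real {ω | X ω ≤ p} :=
  integral_indicator_one (hX measurableSet_Iic)

theorem integral_indicator_Ici_comp (hX : Measurable X) (p : ℝ) :
    ∫ ω, (Ici p).indicator 1 (X ω) ∂μ = μ.real {ω | p ≤ X ω} :=
  integral_indicator_one (hX measurableSet_Ici)

theorem nonneg_of_measure_setOf_le_ne_zero (hX0 : ∀ ω, 0 ≤ X ω) {M : ℝ}
    (hM : μ {ω | X ω ≤ M} ≠ 0) : 0 ≤ M := by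
  by_contra! hneg
  refine hM (measure_mono_null (fun ω (hω : X ω ≤ M) => ?_) measure_empty)
  linarith [hX0 ω]

variable [IsFiniteMeasure μ]

theorem integrable_max_sub_const (hX : Integrable X μ) (p : ℝ) :
    Integrable (fun ω => max (X ω - p) 0) μ :=
  (hX.sub (integrable_const p)).pos_part

theorem integrable_max_const_sub (hX : Integrable X μ) (p : ℝ) :
    Integrable (fun ω => max (p - X ω) 0) μ :=
  ((integrable_const p).sub hX).pos_part

theorem integrable_indicator_one_comp (hX : Measurable X) {s : Set ℝ} (hs : MeasurableSet s) :
    Integrable (fun ω => s.indicator (1 : ℝ → ℝ) (X ω)) μ :=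
  (integrable_const (1 : ℝ)).indicator (hX hs)

theorem integral_add_indicator_const {f : Ω → ℝ} (hf : Integrable f μ) {s : Set Ω}
    (hs : MeasurableSet s) (c : ℝ) :
    ∫ ω, f ω + s.indicator (fun _ => c) ω ∂μ = ∫ ω, f ω ∂μ + μ.real s * c := by
  rw [integral_add hf ((integrable_const c).indicator hs), integral_indicator_const c hs,
    smul_eq_mul]

theorem excess_antitone (hX : Integrable X μ) : Antitone (excess μ X) := fun _ _ hpq =>
  integral_mono (integrable_max_sub_const hX _) (integrable_max_sub_const hX _) fun _ =>
    max_le_max (by linarith) le_rfl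

theorem excess_le_excess_add (hXm : Measurable X) (hX : Integrable X μ) {p q : ℝ} (hpq : p ≤ q) :
    excess μ X p ≤ excess μ X q + μ.real {ω | p ≤ X ω} * (q - p) := by
  have hs : MeasurableSet {ω | p ≤ X ω} := hXm measurableSet_Ici
  rw [excess, excess, ← integral_add_indicator_const (integrable_max_sub_const hX q) hs]
  refine integral_mono (integrable_max_sub_const hX p)
    ((integrable_max_sub_const hX q).add ((integrable_const _).indicator hs)) fun ω => ?_
  simp only [indicator, mem_ofPred_eq, max_def]
  split_ifs <;> linarith

theorem deficit_le_deficit_add (hXm : Measurable X) (hX : Integrable X μ) {p q : ℝ}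
    (hpq : p ≤ q) :
    deficit μ X q ≤ deficit μ X p + μ.real {ω | X ω ≤ q} * (q - p) := by
  have hs : MeasurableSet {ω | X ω ≤ q} := hXm measurableSet_Iic
  rw [deficit, deficit, ← integral_add_indicator_const (integrable_max_const_sub hX p) hs]
  refine integral_mono (integrable_max_const_sub hX q)
    ((integrable_max_const_sub hX p).add ((integrable_const _).indicator hs)) fun ω => ?_
  simp only [indicator, mem_ofPred_eq, max_def]
  split_ifs <;> linarith

theorem deficit_le_two_step (hXm : Measurable X) (hX : Integrable X μ) (hX0 : ∀ ω, 0 ≤ X ω)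
    {p q : ℝ} (hqp : q ≤ p) :
    deficit μ X p ≤ μ.real {ω | X ω ≤ p} * (p - q) + μ.real {ω | X ω ≤ q} * q := by
  have hsp : MeasurableSet {ω | X ω ≤ p} := hXm measurableSet_Iic
  have hsq : MeasurableSet {ω | X ω ≤ q} := hXm measurableSet_Iic
  calc deficit μ X p
      ≤ ∫ ω, {ω | X ω ≤ p}.indicator (fun _ => p - q) ω
          + {ω | X ω ≤ q}.indicator (fun _ => q) ω ∂μ := by
        refine integral_mono (integrable_max_const_sub hX p)
          (((integrable_const _).indicator hsp).add ((integrable_const _).indicator hsq))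
          fun ω => ?_
        have := hX0 ω
        simp only [indicator, mem_ofPred_eq, max_def]
        split_ifs <;> linarith
    _ = _ := by
      rw [integral_add_indicator_const ((integrable_const _).indicator hsp) hsq,
        integral_indicator_const _ hsp, smul_eq_mul]

end OneVariable

section Probability

variable {μ : Measure Ω} [IsProbabilityMeasure μ] {X : Ω → ℝ}

theorem le_integral_add_deficit (hX : Integrable X μ) (p : ℝ) :
    p ≤ ∫ ω, X ω ∂μ + deficit μ X p := by
  have h : ∫ ω, p - X ω ∂μ ≤ deficit μ X p :=
    integral_mono ((integrable_const p).sub hX) (integrable_max_const_sub hX p) fun _ =>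
      le_max_left _ _
  rw [integral_sub (integrable_const p) hX, integral_const, probReal_univ, one_smul] at h
  linarith

theorem mul_one_sub_measureReal_le_integral (hXm : Measurable X) (hX : Integrable X μ)
    (hX0 : ∀ ω, 0 ≤ X ω) {t : ℝ} (ht : 0 ≤ t) :
    t * (1 - μ.real {ω | X ω ≤ t}) ≤ ∫ ω, X ω ∂μ := by
  have hcompl : {ω | X ω ≤ t}ᶜ ⊆ {ω | t ≤ X ω} := fun ω (h : ¬X ω ≤ t) => (not_le.mp h).le
  have hs : MeasurableSet {ω | X ω ≤ t} := hXm measurableSet_Iic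
  rw [← probReal_compl_eq_one_sub hs]
  calc t * μ.real {ω | X ω ≤ t}ᶜ ≤ t * μ.real {ω | t ≤ X ω} :=
        mul_le_mul_of_nonneg_left (measureReal_mono hcompl) ht
    _ ≤ ∫ ω, X ω ∂μ := mul_meas_ge_le_integral_of_nonneg (ae_of_all _ hX0) hX t

end Probability

section FixedPrice

variable {μ : Measure Ω} [IsFiniteMeasure μ] {vs vb : Ω → ℝ}

theorem fixedPrice_outcome_eq (x y p : ℝ) :
    (if x ≤ p ∧ p ≤ y then y else x) =
      x + (Iic p).indicator 1 x * max (y - p) 0 + max (p - x) 0 * (Ici p).indicator 1 y := by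
  simp only [ite_and, indicator, mem_Iic, mem_Ici, Pi.one_apply, max_def]
  split_ifs <;> linarith

theorem welfare_eq (hvs : Measurable vs) (hvb : Measurable vb) (hind : IndepFun vs vb μ)
    (hvsi : Integrable vs μ) (hvbi : Integrable vb μ) (p : ℝ) :
    welfare μ vs vb p = ∫ ω, vs ω ∂μ + μ.real {ω | vs ω ≤ p} * excess μ vb p
      + deficit μ vs p * μ.real {ω | p ≤ vb ω} := by
  have hsell := integrable_indicator_one_comp (μ := μ) hvs measurableSet_Iic (s := Iic p)
  have hbuy := integrable_indicator_one_comp (μ := μ) hvb measurableSet_Ici (s := Ici p)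
  have hφ : Measurable ((Iic p).indicator (1 : ℝ → ℝ)) := measurable_one.indicator measurableSet_Iic
  have hψ : Measurable ((Ici p).indicator (1 : ℝ → ℝ)) := measurable_one.indicator measurableSet_Ici
  have hind₁ := hind.comp hφ (show Measurable fun y : ℝ => max (y - p) 0 by fun_prop)
  have hind₂ := hind.comp (show Measurable fun x : ℝ => max (p - x) 0 by fun_prop) hψ
  have i₁ : Integrable (fun ω => (Iic p).indicator 1 (vs ω) * max (vb ω - p) 0) μ :=
    hind₁.integrable_mul hsell (integrable_max_sub_const hvbi p)
  have i₂ : Integrable (fun ω => max (p - vs ω) 0 * (Ici p).indicator 1 (vb ω)) μ :=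
    hind₂.integrable_mul (integrable_max_const_sub hvsi p) hbuy
  have e₁ : ∫ ω, (Iic p).indicator 1 (vs ω) * max (vb ω - p) 0 ∂μ
      = μ.real {ω | vs ω ≤ p} * excess μ vb p := by
    rw [← integral_indicator_Iic_comp hvs]
    exact hind₁.integral_fun_mul_eq_mul_integral hsell.1 (integrable_max_sub_const hvbi p).1
  have e₂ : ∫ ω, max (p - vs ω) 0 * (Ici p).indicator 1 (vb ω) ∂μ
      = deficit μ vs p * μ.real {ω | p ≤ vb ω} := by
    rw [← integral_indicator_Ici_comp hvb]
    exact hind₂.integral_fun_mul_eq_mul_integral (integrable_max_const_sub hvsi p).1 hbuy.1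
  have i₀ : Integrable (fun ω => vs ω + (Iic p).indicator 1 (vs ω) * max (vb ω - p) 0) μ :=
    hvsi.add i₁
  simp only [welfare, fixedPrice_outcome_eq]
  rw [integral_add i₀ i₂, integral_add hvsi i₁, e₁, e₂]

theorem optimalWelfare_le_add_excess_add_deficit (hvsi : Integrable vs μ)
    (hvbi : Integrable vb μ) (p : ℝ) :
    optimalWelfare μ vs vb ≤ ∫ ω, vs ω ∂μ + excess μ vb p + deficit μ vs p := by
  have i₀ : Integrable (fun ω => vs ω + max (vb ω - p) 0) μ :=
    hvsi.add (integrable_max_sub_const hvbi p)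
  rw [excess, deficit, ← integral_add hvsi (integrable_max_sub_const hvbi p),
    ← integral_add i₀ (integrable_max_const_sub hvsi p)]
  refine integral_mono (hvsi.sup hvbi) (i₀.add (integrable_max_const_sub hvsi p)) fun ω => ?_
  simp only [max_def]
  split_ifs <;> linarith

theorem optimalWelfare_le_add_excess_add_deficit_mul_add (hvs : Measurable vs) (hvb : Measurable vb)
    (hind : IndepFun vs vb μ) (hvsi : Integrable vs μ) (hvbi : Integrable vb μ)
    (hvs0 : ∀ ω, 0 ≤ vs ω) {p t : ℝ} (ht : 0 ≤ t) (htp : t ≤ p) :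
    optimalWelfare μ vs vb ≤ ∫ ω, vs ω ∂μ + excess μ vb p
      + deficit μ vs p * μ.real {ω | t ≤ vb ω} + μ.real {ω | vs ω ≤ p} * t := by
  have hbuy := integrable_indicator_one_comp (μ := μ) hvb measurableSet_Ici (s := Ici t)
  have hψ : Measurable ((Ici t).indicator (1 : ℝ → ℝ)) := measurable_one.indicator measurableSet_Ici
  have hind' := hind.comp (show Measurable fun x : ℝ => max (p - x) 0 by fun_prop) hψ
  have hs : MeasurableSet {ω | vs ω ≤ p} := hvs measurableSet_Iic
  have i₀ : Integrable (fun ω => vs ω + max (vb ω - p) 0) μ :=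
    hvsi.add (integrable_max_sub_const hvbi p)
  have i₁ : Integrable (fun ω => max (p - vs ω) 0 * (Ici t).indicator 1 (vb ω)) μ :=
    hind'.integrable_mul (integrable_max_const_sub hvsi p) hbuy
  have i₂ : Integrable (fun ω => vs ω + max (vb ω - p) 0
      + max (p - vs ω) 0 * (Ici t).indicator 1 (vb ω)) μ := i₀.add i₁
  have e₁ : ∫ ω, max (p - vs ω) 0 * (Ici t).indicator 1 (vb ω) ∂μ
      = deficit μ vs p * μ.real {ω | t ≤ vb ω} := by
    rw [← integral_indicator_Ici_comp hvb]
    exact hind'.integral_fun_mul_eq_mul_integral (integrable_max_const_sub hvsi p).1 hbuy.1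
  calc optimalWelfare μ vs vb
      ≤ ∫ ω, vs ω + max (vb ω - p) 0 + max (p - vs ω) 0 * (Ici t).indicator 1 (vb ω)
          + {ω | vs ω ≤ p}.indicator (fun _ => t) ω ∂μ := by
        refine integral_mono (hvsi.sup hvbi) (i₂.add ((integrable_const t).indicator hs))
          fun ω => ?_
        have := hvs0 ω
        simp only [indicator, mem_Ici, mem_ofPred_eq, Pi.one_apply, max_def]
        split_ifs <;> linarith
    _ = _ := by
      rw [integral_add_indicator_const i₂ hs, integral_add i₀ i₁,
        integral_add hvsi (integrable_max_sub_const hvbi p), e₁, excess]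

end FixedPrice

theorem lt_twentyfive_mul_of_markov {a Om F B : ℝ} (ha : 0 ≤ a) (hF0 : 0 ≤ F) (hB0 : 0 ≤ B)
    (hF : Om - 8 * a ≤ F * Om) (hB : 3 / 4 * Om - a ≤ B) (h : a + F * B < 28 / 55 * Om) :
    Om < 25 * a := by
  by_contra! hOm
  have hOm0 : 0 ≤ Om := by linarith
  have hFB : (Om - 8 * a) * (3 / 4 * Om - a) ≤ F * Om * B := by
    calc (Om - 8 * a) * (3 / 4 * Om - a) ≤ (Om - 8 * a) * B := by gcongr; linarith
      _ ≤ F * Om * B := by gcongr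
  nlinarith

/-- `σs, σb, βs, βb` stand for `σ` and `β` at `Ms` and `Mb`, `g = P(Ms ≤ v_b)` and
`f = P(v_s ≤ Mb)`; the hypotheses `hW₁, hW₂, hW₃` say that the prices `Ms`, `Mb`, `Ms + 4a` fail. -/
theorem false_of_price_bounds {a Om Ms Mb σs σb βs βb g f : ℝ}
    (ha : 0 ≤ a) (hσs : 0 ≤ σs) (hg : 0 ≤ g) (hg₂ : g ≤ 1 / 2) (hβs : 0 ≤ βs) (hβ : βs ≤ βb)
    (hMb : 0 ≤ Mb) (hMbs : Mb ≤ Ms) (hσMs : σs ≤ Ms / 2) (hMsσ : Ms ≤ a + σs)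
    (hσf : σs - (Ms - Mb) / 2 ≤ Mb * f) (hσ : σs - (Ms - Mb) / 2 ≤ σb)
    (hO₁ : Om ≤ a + βs + σs * g + 1 / 2 * Ms) (hO₂ : Om ≤ a + βs + σs * (1 / 2) + 1 / 2 * Mb)
    (h25 : Om < 25 * a)
    (hW₁ : a + 1 / 2 * βs + σs * g < 28 / 55 * Om)
    (hW₂ : a + f * βb + σb * (1 / 2) < 28 / 55 * Om)
    (hW₃ : a + 3 / 4 * (βs - 4 * a * g) < 28 / 55 * Om) : False := by
  have h0 : a < 28 / 55 * Om := by nlinarith [mul_nonneg hσs hg]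
  have hE : (σs - (Ms - Mb) / 2) * (Om - a - σs / 2) ≤ Mb * (28 / 55 * Om - a) := by
    rcases le_or_gt (σs - (Ms - Mb) / 2) 0 with hs | hs
    · have : 0 ≤ Om - a - σs / 2 := by linarith
      nlinarith
    · calc (σs - (Ms - Mb) / 2) * (Om - a - σs / 2)
          ≤ (σs - (Ms - Mb) / 2) * βb + Mb * (σb / 2) := by nlinarith
        _ ≤ Mb * f * βb + Mb * (σb / 2) := by gcongr; linarith
        _ = Mb * (f * βb + σb / 2) := by ring
        _ ≤ Mb * (28 / 55 * Om - a) := by gcongr; linarith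
  nlinarith [sq_nonneg (a - σs)]

section Approximation

variable {μ : Measure Ω} [IsProbabilityMeasure μ] {vs vb : Ω → ℝ}

theorem optimalWelfare_le_add_excess_add (hvsi : Integrable vs μ) (hvbi : Integrable vb μ)
    (hvs0 : ∀ ω, 0 ≤ vs ω) {t : ℝ} (ht : 0 ≤ t) :
    optimalWelfare μ vs vb ≤ ∫ ω, vs ω ∂μ + excess μ vb t + t := by
  have i₀ : Integrable (fun ω => vs ω + max (vb ω - t) 0) μ :=
    hvsi.add (integrable_max_sub_const hvbi t)
  calc optimalWelfare μ vs vb ≤ ∫ ω, vs ω + max (vb ω - t) 0 + t ∂μ := by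
        refine integral_mono (hvsi.sup hvbi) (i₀.add (integrable_const t)) fun ω => ?_
        have := hvs0 ω
        simp only [max_def]
        split_ifs <;> linarith
    _ = _ := by
      rw [integral_add i₀ (integrable_const t), integral_add hvsi (integrable_max_sub_const hvbi t),
        integral_const, probReal_univ, one_smul, excess]

theorem optimalWelfare_lt_twentyfive_mul (hvs : Measurable vs) (hvb : Measurable vb)
    (hind : IndepFun vs vb μ) (hvsi : Integrable vs μ) (hvbi : Integrable vb μ)
    (hvs0 : ∀ ω, 0 ≤ vs ω)
    (hfail : ∀ p, welfare μ vs vb p < 28 / 55 * optimalWelfare μ vs vb) :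
    optimalWelfare μ vs vb < 25 * ∫ ω, vs ω ∂μ := by
  have hOm : 0 ≤ optimalWelfare μ vs vb :=
    integral_nonneg fun ω => (hvs0 ω).trans (le_max_left _ _)
  set Om := optimalWelfare μ vs vb
  have ht : 0 ≤ Om / 8 := by positivity
  have hW := hfail (Om / 8)
  rw [welfare_eq hvs hvb hind hvsi hvbi] at hW
  have hmarkov := mul_one_sub_measureReal_le_integral hvs hvsi hvs0 ht
  have htail := optimalWelfare_le_add_excess_add hvsi hvbi hvs0 ht
  have hσG := mul_nonneg (deficit_nonneg (μ := μ) (X := vs) (Om / 8))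
    (measureReal_nonneg (μ := μ) (s := {ω | Om / 8 ≤ vb ω}))
  refine lt_twentyfive_mul_of_markov (F := μ.real {ω | vs ω ≤ Om / 8}) (B := excess μ vb (Om / 8))
    (integral_nonneg hvs0) measureReal_nonneg (excess_nonneg _) ?_ ?_ ?_ <;> linarith

theorem le_welfare_add_four_mul_integral (hvs : Measurable vs) (hvb : Measurable vb)
    (hind : IndepFun vs vb μ) (hvsi : Integrable vs μ) (hvbi : Integrable vb μ)
    (hvs0 : ∀ ω, 0 ≤ vs ω) {M : ℝ} (hM : 0 ≤ M) (ha : 0 < ∫ ω, vs ω ∂μ) :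
    ∫ ω, vs ω ∂μ + 3 / 4 * (excess μ vb M - 4 * (∫ ω, vs ω ∂μ) * μ.real {ω | M ≤ vb ω})
      ≤ welfare μ vs vb (M + 4 * ∫ ω, vs ω ∂μ) := by
  set a := ∫ ω, vs ω ∂μ
  set F := μ.real {ω | vs ω ≤ M + 4 * a}
  have hmarkov :=
    mul_one_sub_measureReal_le_integral hvs hvsi hvs0 (t := M + 4 * a) (by positivity)
  have hF : 3 / 4 ≤ F := by
    have hF1 : F ≤ 1 := measureReal_le_one
    have : 4 * a * (1 - F) ≤ (M + 4 * a) * (1 - F) :=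
      mul_le_mul_of_nonneg_right (by linarith) (by linarith)
    nlinarith
  have hlip := excess_le_excess_add hvb hvbi (μ := μ) (by linarith : M ≤ M + 4 * a)
  have hβ := excess_nonneg (μ := μ) (X := vb) (M + 4 * a)
  have hσG := mul_nonneg (deficit_nonneg (μ := μ) (X := vs) (M + 4 * a))
    (measureReal_nonneg (μ := μ) (s := {ω | M + 4 * a ≤ vb ω}))
  have hFβ := mul_le_mul_of_nonneg_right hF hβ
  rw [welfare_eq hvs hvb hind hvsi hvbi]
  linarith

theorem false_of_le_of_forall_welfare_lt (hvs : Measurable vs) (hvb : Measurable vb)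
    (hind : IndepFun vs vb μ) (hvsi : Integrable vs μ) (hvbi : Integrable vb μ)
    (hvs0 : ∀ ω, 0 ≤ vs ω) {Ms Mb : ℝ} (hFs : μ.real {ω | vs ω ≤ Ms} = 1 / 2)
    (hGb : μ.real {ω | Mb ≤ vb ω} = 1 / 2) (hle : Ms ≤ Mb)
    (h25 : optimalWelfare μ vs vb < 25 * ∫ ω, vs ω ∂μ)
    (hfail : ∀ p, welfare μ vs vb p < 28 / 55 * optimalWelfare μ vs vb) : False := by
  have hW := hfail Ms
  rw [welfare_eq hvs hvb hind hvsi hvbi, hFs] at hW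
  have hG : 1 / 2 ≤ μ.real {ω | Ms ≤ vb ω} :=
    hGb ▸ measureReal_mono fun ω (h : Mb ≤ vb ω) => hle.trans h
  have hO := optimalWelfare_le_add_excess_add_deficit hvsi hvbi Ms
  have := mul_le_mul_of_nonneg_left hG (deficit_nonneg (μ := μ) (X := vs) Ms)
  have ha : 0 ≤ ∫ ω, vs ω ∂μ := integral_nonneg hvs0
  linarith

theorem false_of_lt_of_forall_welfare_lt (hvs : Measurable vs) (hvb : Measurable vb)
    (hind : IndepFun vs vb μ) (hvsi : Integrable vs μ) (hvbi : Integrable vb μ)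
    (hvs0 : ∀ ω, 0 ≤ vs ω) {Ms Mb : ℝ} (hFs : μ.real {ω | vs ω ≤ Ms} = 1 / 2)
    (hGb : μ.real {ω | Mb ≤ vb ω} = 1 / 2) (hMb : 0 ≤ Mb) (hlt : Mb < Ms)
    (h25 : optimalWelfare μ vs vb < 25 * ∫ ω, vs ω ∂μ)
    (hfail : ∀ p, welfare μ vs vb p < 28 / 55 * optimalWelfare μ vs vb) : False := by
  have hOm : 0 ≤ optimalWelfare μ vs vb :=
    integral_nonneg fun ω => (hvs0 ω).trans (le_max_left _ _)
  have hW₁ := hfail Ms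
  rw [welfare_eq hvs hvb hind hvsi hvbi, hFs] at hW₁
  have hW₂ := hfail Mb
  rw [welfare_eq hvs hvb hind hvsi hvbi, hGb] at hW₂
  have hW₃ := (le_welfare_add_four_mul_integral hvs hvb hind hvsi hvbi hvs0 (hMb.trans hlt.le)
    (by linarith)).trans_lt (hfail _)
  have hO₁ := optimalWelfare_le_add_excess_add_deficit_mul_add hvs hvb hind hvsi hvbi hvs0
    (hMb.trans hlt.le) le_rfl
  have hO₂ := optimalWelfare_le_add_excess_add_deficit_mul_add hvs hvb hind hvsi hvbi hvs0
    hMb hlt.le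
  have hσMs := deficit_le_two_step hvs hvsi hvs0 (hMb.trans hlt.le)
  have hσf := deficit_le_two_step hvs hvsi hvs0 hlt.le
  have hσ := deficit_le_deficit_add hvs hvsi hlt.le
  rw [hFs] at hO₁ hO₂ hσMs hσf hσ
  rw [hGb] at hO₂
  have hg : μ.real {ω | Ms ≤ vb ω} ≤ 1 / 2 :=
    hGb ▸ measureReal_mono fun ω (h : Ms ≤ vb ω) => hlt.le.trans h
  exact false_of_price_bounds (integral_nonneg hvs0) (deficit_nonneg Ms) measureReal_nonneg hg
    (excess_nonneg Ms) (excess_antitone hvbi hlt.le) hMb hlt.le (by linarith)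
    (le_integral_add_deficit hvsi Ms) (by linarith) (by linarith) hO₁ hO₂ h25 hW₁ hW₂ hW₃

end Approximation

end BilateralTrade

open BilateralTrade

theorem exists_price_fiftyfive_over_twentyeight_approximation_general
    {Ω : Type*} [MeasurableSpace Ω] (μ : Measure Ω) [IsProbabilityMeasure μ]
    (vs vb : Ω → ℝ) (Ms Mb : ℝ)
    (hmeas_s : Measurable vs) (hmeas_b : Measurable vb)
    (hindep : IndepFun vs vb μ)
    (hs_nonneg : ∀ ω, 0 ≤ vs ω) (hb_nonneg : ∀ ω, 0 ≤ vb ω)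
    (hs_int : Integrable vs μ) (hb_int : Integrable vb μ)
    (hmeds_le : μ {ω | vs ω ≤ Ms} = 1 / 2)
    (hmedb_le : μ {ω | vb ω ≤ Mb} = 1 / 2)
    (hmedb_ge : μ {ω | Mb ≤ vb ω} = 1 / 2) :
    ∃ p : ℝ,
      (28 / 55) * ∫ ω, max (vs ω) (vb ω) ∂μ
        ≤ ∫ ω, (if vs ω ≤ p ∧ p ≤ vb ω then vb ω else vs ω) ∂μ := by
  by_contra! hfail
  have h25 := optimalWelfare_lt_twentyfive_mul hmeas_s hmeas_b hindep hs_int hb_int hs_nonneg hfail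
  have hFs : μ.real {ω | vs ω ≤ Ms} = 1 / 2 := by simp [measureReal_def, hmeds_le]
  have hGb : μ.real {ω | Mb ≤ vb ω} = 1 / 2 := by simp [measureReal_def, hmedb_ge]
  rcases le_or_gt Ms Mb with hle | hlt
  · exact false_of_le_of_forall_welfare_lt hmeas_s hmeas_b hindep hs_int hb_int hs_nonneg hFs hGb
      hle h25 hfail
  · have hMb : 0 ≤ Mb := nonneg_of_measure_setOf_le_ne_zero (μ := μ) hb_nonneg (by simp [hmedb_le])
    exact false_of_lt_of_forall_welfare_lt hmeas_s hmeas_b hindep hs_int hb_int hs_nonneg hFs hGb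
      hMb hlt h25 hfail

/-- There is a trade price whose fixed-price mechanism achieves a `55/28`-approximation
to the optimal expected welfare in bilateral trade, when the seller's value has an
exact median `Ms` and the buyer's value has an exact median `Mb`. -/
theorem exists_price_fiftyfive_over_twentyeight_approximation
    {Ω : Type*} [MeasurableSpace Ω] (μ : Measure Ω) [IsProbabilityMeasure μ]
    (vs vb : Ω → ℝ) (Ms Mb : ℝ)
    (hmeas_s : Measurable vs) (hmeas_b : Measurable vb)
    (hindep : IndepFun vs vb μ)
    (hs_nonneg : ∀ ω, 0 ≤ vs ω) (hb_nonneg : ∀ ω, 0 ≤ vb ω)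
    (hs_int : Integrable vs μ) (hb_int : Integrable vb μ)
    (hmeds_le : μ {ω | vs ω ≤ Ms} = 1 / 2)
    (hmeds_ge : μ {ω | Ms ≤ vs ω} = 1 / 2)
    (hmedb_le : μ {ω | vb ω ≤ Mb} = 1 / 2)
    (hmedb_ge : μ {ω | Mb ≤ vb ω} = 1 / 2) :
    ∃ p : ℝ,
      (28 / 55) * ∫ ω, max (vs ω) (vb ω) ∂μ
        ≤ ∫ ω, (if vs ω ≤ p ∧ p ≤ vb ω then vb ω else vs ω) ∂μ :=
  exists_price_fiftyfive_over_twentyeight_approximation_general μ vs vb Ms Mb hmeas_s hmeas_b hindep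
    hs_nonneg hb_nonneg hs_int hb_int hmeds_le hmedb_le hmedb_ge
end

section
/- Suppose v_s has an exact median M_s, v_b has an exact median M_b, and M_b ≥ M_s. Then there exists a trade price p ∈ ℝ such that E[W_p] ≥ (7/13)·E[max(v_s, v_b)]; that is, some fixed-price mechanism achieves a 13/7-approximation to the optimal welfare in this case. -/
/-!
Write `a = E[v_s]`, `T = E[max(v_s, v_b)]`, `F(p) = P(v_s ≤ p)`, `G(p) = P(v_b ≥ p)`. Pointwise,
`W_p = v_s + 1{v_s ≤ p} (v_b - p)⁺ + 1{v_b ≥ p} (p - v_s)⁺`, so by independence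
`E[W_p] = a + F(p) E[(v_b - p)⁺] + G(p) E[(p - v_s)⁺]`, while
`max(v_s, v_b) ≤ v_s + (p - v_s)⁺ + (v_b - p)⁺`.

If `T ≤ 13a`, the seller's median `p = M_s` has `F(p) = 1/2` and `G(p) ≥ P(v_b ≥ M_b) = 1/2`,
hence `E[W_p] ≥ (T + a)/2 ≥ 7T/13`. Otherwise the seller's values are small and at the
price `t = 4T/13` the seller is usually willing to trade: Markov gives `F(t) ≥ 1 - a/t`, and
`v_s ≥ 0` gives `E[(v_b - t)⁺] ≥ T - a - t`, so `E[W_t] ≥ a + (1 - a/t)(T - a - t) ≥ 7T/13`,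
with equality in the last step exactly at `13a = T`.
-/

open MeasureTheory ProbabilityTheory

theorem ProbabilityTheory.IndepFun.setIntegral_preimage_eq_mul {Ω α β : Type*}
    [MeasurableSpace Ω] [MeasurableSpace α] [MeasurableSpace β] {μ : Measure Ω}
    {X : Ω → α} {Y : Ω → β} (hXY : IndepFun X Y μ) (hX : Measurable X) (hY : AEMeasurable Y μ)
    {s : Set α} (hs : MeasurableSet s) {f : β → ℝ} (hf : AEStronglyMeasurable f (μ.map Y)) :
    ∫ ω in X ⁻¹' s, f (Y ω) ∂μ = μ.real (X ⁻¹' s) * ∫ ω, f (Y ω) ∂μ :=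
  ((IndepFun_iff_Indep X Y μ).1 hXY).setIntegral_eq_mul hX.comap_le hY ⟨s, hs, rfl⟩ hf

theorem one_sub_integral_div_le_measureReal_preimage_Iic {Ω : Type*} [MeasurableSpace Ω]
    {μ : Measure Ω} [IsProbabilityMeasure μ] {X : Ω → ℝ} (hX : Measurable X)
    (hX_nonneg : ∀ ω, 0 ≤ X ω) (hX_int : Integrable X μ) {t : ℝ} (ht : 0 < t) :
    1 - (∫ ω, X ω ∂μ) / t ≤ μ.real (X ⁻¹' Set.Iic t) := by
  have hmarkov := mul_meas_ge_le_integral_of_nonneg (Filter.Eventually.of_forall hX_nonneg)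
    hX_int t
  have hgt : μ.real (X ⁻¹' Set.Ioi t) ≤ μ.real {ω | t ≤ X ω} :=
    measureReal_mono fun ω (h : t < X ω) => h.le
  have hcompl : μ.real (X ⁻¹' Set.Iic t) = 1 - μ.real (X ⁻¹' Set.Ioi t) := by
    rw [← probReal_compl_eq_one_sub (hX measurableSet_Ioi), ← Set.preimage_compl,
      Set.compl_Ioi]
  rw [hcompl, sub_le_sub_iff_left, le_div_iff₀ ht]
  linarith [mul_le_mul_of_nonneg_left hgt ht.le]

namespace BilateralTrade

noncomputable def fixedPriceWelfare {Ω : Type*} (vs vb : Ω → ℝ) (p : ℝ) (ω : Ω) : ℝ :=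
  if vs ω ≤ p ∧ p ≤ vb ω then vb ω else vs ω

theorem fixedPriceWelfare_eq {Ω : Type*} (vs vb : Ω → ℝ) (p : ℝ) :
    fixedPriceWelfare vs vb p = vs + (vs ⁻¹' Set.Iic p).indicator (fun ω => max (vb ω - p) 0)
      + (vb ⁻¹' Set.Ici p).indicator (fun ω => max (p - vs ω) 0) := by
  ext ω
  by_cases hs : vs ω ≤ p <;> by_cases hb : p ≤ vb ω <;>
    simp [fixedPriceWelfare, hs, hb] <;> linarith

theorem max_le_add_posPart_add_posPart (x y p : ℝ) :
    max x y ≤ x + max (p - x) 0 + max (y - p) 0 :=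
  max_le (by linarith [le_max_right (p - x) 0, le_max_right (y - p) 0])
    (by linarith [le_max_left (p - x) 0, le_max_left (y - p) 0])

theorem max_le_add_posPart_add {x y t : ℝ} (hx : 0 ≤ x) (ht : 0 ≤ t) :
    max x y ≤ x + max (y - t) 0 + t :=
  max_le (by linarith [le_max_right (y - t) 0]) (by linarith [le_max_left (y - t) 0])

variable {Ω : Type*} [MeasurableSpace Ω] {μ : Measure Ω} [IsProbabilityMeasure μ]
  {vs vb : Ω → ℝ}

theorem integral_fixedPriceWelfare (hmeas_s : Measurable vs) (hmeas_b : Measurable vb)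
    (hindep : IndepFun vs vb μ) (hs_int : Integrable vs μ) (hb_int : Integrable vb μ) (p : ℝ) :
    ∫ ω, fixedPriceWelfare vs vb p ω ∂μ = ∫ ω, vs ω ∂μ
      + μ.real (vs ⁻¹' Set.Iic p) * ∫ ω, max (vb ω - p) 0 ∂μ
      + μ.real (vb ⁻¹' Set.Ici p) * ∫ ω, max (p - vs ω) 0 ∂μ := by
  have hβ : Integrable (fun ω => max (vb ω - p) 0) μ :=
    (hb_int.sub (integrable_const p)).pos_part
  have hσ : Integrable (fun ω => max (p - vs ω) 0) μ :=
    ((integrable_const p).sub hs_int).pos_part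
  have hs_set : MeasurableSet (vs ⁻¹' Set.Iic p) := hmeas_s measurableSet_Iic
  have hb_set : MeasurableSet (vb ⁻¹' Set.Ici p) := hmeas_b measurableSet_Ici
  rw [fixedPriceWelfare_eq,
    integral_add' (hs_int.add (hβ.indicator hs_set)) (hσ.indicator hb_set),
    integral_add' hs_int (hβ.indicator hs_set), integral_indicator hs_set,
    integral_indicator hb_set,
    hindep.setIntegral_preimage_eq_mul hmeas_s hmeas_b.aemeasurable measurableSet_Iic
      (f := fun y => max (y - p) 0) (by fun_prop),
    hindep.symm.setIntegral_preimage_eq_mul hmeas_b hmeas_s.aemeasurable measurableSet_Ici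
      (f := fun x => max (p - x) 0) (by fun_prop)]

theorem integral_max_le_add_integral_posPart_add_integral_posPart (hs_int : Integrable vs μ)
    (hb_int : Integrable vb μ) (p : ℝ) :
    ∫ ω, max (vs ω) (vb ω) ∂μ
      ≤ ∫ ω, vs ω ∂μ + ∫ ω, max (p - vs ω) 0 ∂μ + ∫ ω, max (vb ω - p) 0 ∂μ := by
  have hσ : Integrable (fun ω => max (p - vs ω) 0) μ :=
    ((integrable_const p).sub hs_int).pos_part
  have hβ : Integrable (fun ω => max (vb ω - p) 0) μ :=
    (hb_int.sub (integrable_const p)).pos_part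
  have hsσ : Integrable (fun ω => vs ω + max (p - vs ω) 0) μ := hs_int.add hσ
  calc ∫ ω, max (vs ω) (vb ω) ∂μ
      ≤ ∫ ω, (vs ω + max (p - vs ω) 0 + max (vb ω - p) 0) ∂μ :=
        integral_mono (hs_int.sup hb_int) (hsσ.add hβ)
          fun ω => max_le_add_posPart_add_posPart (vs ω) (vb ω) p
    _ = _ := by rw [integral_add hsσ hβ, integral_add hs_int hσ]

theorem integral_max_le_add_integral_posPart_add (hs_nonneg : ∀ ω, 0 ≤ vs ω)
    (hs_int : Integrable vs μ) (hb_int : Integrable vb μ) {t : ℝ} (ht : 0 ≤ t) :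
    ∫ ω, max (vs ω) (vb ω) ∂μ ≤ ∫ ω, vs ω ∂μ + ∫ ω, max (vb ω - t) 0 ∂μ + t := by
  have hβ : Integrable (fun ω => max (vb ω - t) 0) μ :=
    (hb_int.sub (integrable_const t)).pos_part
  have hsβ : Integrable (fun ω => vs ω + max (vb ω - t) 0) μ := hs_int.add hβ
  calc ∫ ω, max (vs ω) (vb ω) ∂μ ≤ ∫ ω, (vs ω + max (vb ω - t) 0 + t) ∂μ :=
        integral_mono (hs_int.sup hb_int) (hsβ.add (integrable_const t))
          fun ω => max_le_add_posPart_add (hs_nonneg ω) ht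
    _ = _ := by
      rw [integral_add hsβ (integrable_const t), integral_add hs_int hβ,
        integral_const, probReal_univ, one_smul]

theorem integral_max_add_integral_le_two_mul_integral_fixedPriceWelfare
    (hmeas_s : Measurable vs) (hmeas_b : Measurable vb) (hindep : IndepFun vs vb μ)
    (hs_int : Integrable vs μ) (hb_int : Integrable vb μ) {p : ℝ}
    (hs_le : 1 / 2 ≤ μ.real (vs ⁻¹' Set.Iic p)) (hb_ge : 1 / 2 ≤ μ.real (vb ⁻¹' Set.Ici p)) :
    ∫ ω, max (vs ω) (vb ω) ∂μ + ∫ ω, vs ω ∂μ ≤ 2 * ∫ ω, fixedPriceWelfare vs vb p ω ∂μ := by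
  rw [integral_fixedPriceWelfare hmeas_s hmeas_b hindep hs_int hb_int]
  have hβ : 0 ≤ ∫ ω, max (vb ω - p) 0 ∂μ := integral_nonneg fun ω => le_max_right _ _
  have hσ : 0 ≤ ∫ ω, max (p - vs ω) 0 ∂μ := integral_nonneg fun ω => le_max_right _ _
  linarith [integral_max_le_add_integral_posPart_add_integral_posPart hs_int hb_int p,
    mul_le_mul_of_nonneg_right hs_le hβ, mul_le_mul_of_nonneg_right hb_ge hσ]

theorem le_integral_fixedPriceWelfare_of_nonneg (hmeas_s : Measurable vs)
    (hmeas_b : Measurable vb) (hindep : IndepFun vs vb μ) (hs_nonneg : ∀ ω, 0 ≤ vs ω)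
    (hs_int : Integrable vs μ) (hb_int : Integrable vb μ) {t : ℝ} (ht : 0 < t)
    (hs_t : ∫ ω, vs ω ∂μ ≤ t) :
    ∫ ω, vs ω ∂μ + (1 - (∫ ω, vs ω ∂μ) / t) * (∫ ω, max (vs ω) (vb ω) ∂μ - ∫ ω, vs ω ∂μ - t)
      ≤ ∫ ω, fixedPriceWelfare vs vb t ω ∂μ := by
  rw [integral_fixedPriceWelfare hmeas_s hmeas_b hindep hs_int hb_int]
  have hmarkov := one_sub_integral_div_le_measureReal_preimage_Iic hmeas_s hs_nonneg hs_int ht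
  have hβ_lower := integral_max_le_add_integral_posPart_add hs_nonneg hs_int hb_int ht.le
  have hβ : 0 ≤ ∫ ω, max (vb ω - t) 0 ∂μ := integral_nonneg fun ω => le_max_right _ _
  have hσ : 0 ≤ μ.real (vb ⁻¹' Set.Ici t) * ∫ ω, max (t - vs ω) 0 ∂μ :=
    mul_nonneg measureReal_nonneg (integral_nonneg fun ω => le_max_right _ _)
  have hfactor : 0 ≤ 1 - (∫ ω, vs ω ∂μ) / t := by rwa [sub_nonneg, div_le_one ht]
  calc ∫ ω, vs ω ∂μ + (1 - (∫ ω, vs ω ∂μ) / t)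
        * (∫ ω, max (vs ω) (vb ω) ∂μ - ∫ ω, vs ω ∂μ - t)
      ≤ ∫ ω, vs ω ∂μ + (1 - (∫ ω, vs ω ∂μ) / t) * ∫ ω, max (vb ω - t) 0 ∂μ := by
        gcongr
        linarith
    _ ≤ ∫ ω, vs ω ∂μ + μ.real (vs ⁻¹' Set.Iic t) * ∫ ω, max (vb ω - t) 0 ∂μ := by gcongr
    _ ≤ _ := le_add_of_nonneg_right hσ

theorem seven_div_thirteen_mul_le_of_thirteen_mul_lt {a T : ℝ} (ha : 0 ≤ a) (haT : 13 * a < T) :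
    7 / 13 * T ≤ a + (1 - a / (4 * T / 13)) * (T - a - 4 * T / 13) := by
  have hT : 0 < T := by linarith
  have hslack : a + (1 - a / (4 * T / 13)) * (T - a - 4 * T / 13) - 7 / 13 * T
      = (T - 13 * a) * (8 * T - 13 * a) / (52 * T) := by
    field_simp
    ring
  have : 0 ≤ (T - 13 * a) * (8 * T - 13 * a) / (52 * T) := by
    apply div_nonneg (mul_nonneg _ _) <;> linarith
  linarith

end BilateralTrade

theorem exists_price_thirteen_over_seven_approximation_general
    {Ω : Type*} [MeasurableSpace Ω] (μ : Measure Ω) [IsProbabilityMeasure μ]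
    (vs vb : Ω → ℝ) (Ms Mb : ℝ)
    (hmeas_s : Measurable vs) (hmeas_b : Measurable vb)
    (hindep : IndepFun vs vb μ)
    (hs_nonneg : ∀ ω, 0 ≤ vs ω)
    (hs_int : Integrable vs μ) (hb_int : Integrable vb μ)
    (hmeds_le : μ {ω | vs ω ≤ Ms} = 1 / 2)
    (hmedb_ge : μ {ω | Mb ≤ vb ω} = 1 / 2)
    (hMbMs : Ms ≤ Mb) :
    ∃ p : ℝ,
      (7 / 13) * ∫ ω, max (vs ω) (vb ω) ∂μ
        ≤ ∫ ω, (if vs ω ≤ p ∧ p ≤ vb ω then vb ω else vs ω) ∂μ := by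
  set a := ∫ ω, vs ω ∂μ
  set T := ∫ ω, max (vs ω) (vb ω) ∂μ
  by_cases hcase : T ≤ 13 * a
  · refine ⟨Ms, ?_⟩
    have hs_le : 1 / 2 ≤ μ.real (vs ⁻¹' Set.Iic Ms) := by
      simp [measureReal_def, Set.preimage, hmeds_le]
    have hb_ge : 1 / 2 ≤ μ.real (vb ⁻¹' Set.Ici Ms) := by
      calc 1 / 2 = μ.real {ω | Mb ≤ vb ω} := by simp [measureReal_def, hmedb_ge]
        _ ≤ μ.real (vb ⁻¹' Set.Ici Ms) := measureReal_mono fun ω (h : Mb ≤ vb ω) => hMbMs.trans h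
    have := BilateralTrade.integral_max_add_integral_le_two_mul_integral_fixedPriceWelfare
      hmeas_s hmeas_b hindep hs_int hb_int hs_le hb_ge
    change _ ≤ ∫ ω, BilateralTrade.fixedPriceWelfare vs vb Ms ω ∂μ
    linarith
  · refine ⟨4 * T / 13, ?_⟩
    have ha : 0 ≤ a := integral_nonneg hs_nonneg
    exact (BilateralTrade.seven_div_thirteen_mul_le_of_thirteen_mul_lt ha (not_le.1 hcase)).trans
      (BilateralTrade.le_integral_fixedPriceWelfare_of_nonneg hmeas_s hmeas_b hindep hs_nonneg
        hs_int hb_int (by linarith) (by linarith))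

/-- When the buyer's median is at least the seller's median, there is a trade price
whose fixed-price mechanism achieves a `13/7`-approximation to the optimal expected
welfare in bilateral trade. -/
theorem exists_price_thirteen_over_seven_approximation
    {Ω : Type*} [MeasurableSpace Ω] (μ : Measure Ω) [IsProbabilityMeasure μ]
    (vs vb : Ω → ℝ) (Ms Mb : ℝ)
    (hmeas_s : Measurable vs) (hmeas_b : Measurable vb)
    (hindep : IndepFun vs vb μ)
    (hs_nonneg : ∀ ω, 0 ≤ vs ω) (hb_nonneg : ∀ ω, 0 ≤ vb ω)
    (hs_int : Integrable vs μ) (hb_int : Integrable vb μ)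
    (hmeds_le : μ {ω | vs ω ≤ Ms} = 1 / 2)
    (hmeds_ge : μ {ω | Ms ≤ vs ω} = 1 / 2)
    (hmedb_le : μ {ω | vb ω ≤ Mb} = 1 / 2)
    (hmedb_ge : μ {ω | Mb ≤ vb ω} = 1 / 2)
    (hMbMs : Ms ≤ Mb) :
    ∃ p : ℝ,
      (7 / 13) * ∫ ω, max (vs ω) (vb ω) ∂μ
        ≤ ∫ ω, (if vs ω ≤ p ∧ p ≤ vb ω then vb ω else vs ω) ∂μ :=
  exists_price_thirteen_over_seven_approximation_general μ vs vb Ms Mb hmeas_s hmeas_b hindep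
    hs_nonneg hs_int hb_int hmeds_le hmedb_ge hMbMs
end

section
/- (McAfee's gain-from-trade theorem) Suppose v_s has an exact median M_s, v_b has an exact median M_b, and M_b ≥ M_s. Then the expected gain from trade of the fixed-price mechanism with trade price M_s is at least half the optimal expected gain from trade: E[(v_b − v_s)·1{v_s ≤ M_s and v_b ≥ M_s}] ≥ (1/2)·E[max(v_b − v_s, 0)]. -/
open MeasureTheory ProbabilityTheory

/-!
At the price `p = Ms`, the gain `vb - vs` on the trade event splits as the buyer's surplus
`(vb - p)⁺` on `{vs ≤ p}` plus the seller's surplus `(p - vs)⁺` on `{p ≤ vb}`. By independence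
each surplus is weighted by the probability of the other side's event, which is at least `1/2`
since `p` is the seller's median and lies below the buyer's median. Finally
`(vb - vs)⁺ ≤ (vb - p)⁺ + (p - vs)⁺` bounds the optimal gain.
-/

section Pointwise

variable {α : Type*} [AddCommGroup α] [LinearOrder α] [IsOrderedAddMonoid α]

lemma max_sub_zero_le_add (s b p : α) : max (b - s) 0 ≤ max (b - p) 0 + max (p - s) 0 :=
  max_le
    ((sub_add_sub_cancel b p s).symm.le.trans (add_le_add (le_max_left _ _) (le_max_left _ _)))
    (add_nonneg (le_max_right _ _) (le_max_right _ _))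

lemma indicator_trade_gain_eq {Ω : Type*} (vs vb : Ω → α) (p : α) :
    {ω | vs ω ≤ p ∧ p ≤ vb ω}.indicator (fun ω => vb ω - vs ω)
      = {ω | vs ω ≤ p}.indicator (fun ω => max (vb ω - p) 0)
        + {ω | p ≤ vb ω}.indicator (fun ω => max (p - vs ω) 0) := by
  ext ω
  by_cases hs : vs ω ≤ p
  · by_cases hb : p ≤ vb ω
    · simp [Set.indicator, hs, hb]
    · simp [Set.indicator, hs, hb, (not_le.1 hb).le]
  · simp [Set.indicator, hs, (not_le.1 hs).le]

end Pointwise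

section Integral

variable {Ω : Type*} [MeasurableSpace Ω] {μ : Measure Ω}

lemma setIntegral_trade_gain_eq [IsFiniteMeasure μ] {vs vb : Ω → ℝ} (hs : Integrable vs μ)
    (hb : Integrable vb μ) (p : ℝ) :
    ∫ ω in {ω | vs ω ≤ p ∧ p ≤ vb ω}, (vb ω - vs ω) ∂μ
      = ∫ ω in {ω | vs ω ≤ p}, max (vb ω - p) 0 ∂μ
        + ∫ ω in {ω | p ≤ vb ω}, max (p - vs ω) 0 ∂μ := by
  have hS : NullMeasurableSet {ω | vs ω ≤ p} μ :=
    nullMeasurableSet_le hs.aemeasurable aemeasurable_const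
  have hB : NullMeasurableSet {ω | p ≤ vb ω} μ :=
    nullMeasurableSet_le aemeasurable_const hb.aemeasurable
  have hbuyer : Integrable (fun ω => max (vb ω - p) 0) μ := (hb.sub (integrable_const p)).pos_part
  have hseller : Integrable (fun ω => max (p - vs ω) 0) μ := ((integrable_const p).sub hs).pos_part
  rw [← integral_indicator₀ (s := {ω | vs ω ≤ p ∧ p ≤ vb ω}) (hS.inter hB),
    ← integral_indicator₀ hS, ← integral_indicator₀ hB,
    ← integral_add (hbuyer.indicator₀ hS) (hseller.indicator₀ hB)]
  exact congrArg _ (indicator_trade_gain_eq vs vb p)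

lemma ProbabilityTheory.IndepFun.setIntegral_preimage_eq_measureReal_mul {𝓧 𝓨 : Type*}
    [MeasurableSpace 𝓧] [MeasurableSpace 𝓨] {X : Ω → 𝓧} {Y : Ω → 𝓨} (hXY : IndepFun X Y μ)
    (hX : AEMeasurable X μ) (hY : AEMeasurable Y μ) {s : Set 𝓧} (hs : MeasurableSet s) {g : 𝓨 → ℝ}
    (hg : AEStronglyMeasurable g (μ.map Y)) :
    ∫ ω in X ⁻¹' s, g (Y ω) ∂μ = μ.real (X ⁻¹' s) * ∫ ω, g (Y ω) ∂μ := by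
  have hXs := hX.nullMeasurableSet_preimage hs
  calc ∫ ω in X ⁻¹' s, g (Y ω) ∂μ = ∫ ω, s.indicator 1 (X ω) * g (Y ω) ∂μ := by
        rw [← integral_indicator₀ hXs]
        congr with ω
        by_cases h : X ω ∈ s <;> simp [h]
    _ = (∫ ω, s.indicator 1 (X ω) ∂μ) * ∫ ω, g (Y ω) ∂μ :=
        hXY.integral_fun_comp_mul_comp hX hY
          (aestronglyMeasurable_const.indicator hs) hg
    _ = μ.real (X ⁻¹' s) * ∫ ω, g (Y ω) ∂μ := by
        change (∫ ω, (X ⁻¹' s).indicator 1 ω ∂μ) * _ = _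
        rw [integral_indicator₀ hXs, Pi.one_def, setIntegral_const, smul_eq_mul, mul_one]

lemma integral_max_sub_le_add [IsFiniteMeasure μ] {vs vb : Ω → ℝ} (hs : Integrable vs μ)
    (hb : Integrable vb μ) (p : ℝ) :
    ∫ ω, max (vb ω - vs ω) 0 ∂μ
      ≤ ∫ ω, max (vb ω - p) 0 ∂μ + ∫ ω, max (p - vs ω) 0 ∂μ := by
  have hbuyer : Integrable (fun ω => max (vb ω - p) 0) μ := (hb.sub (integrable_const p)).pos_part
  have hseller : Integrable (fun ω => max (p - vs ω) 0) μ := ((integrable_const p).sub hs).pos_part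
  rw [← integral_add hbuyer hseller]
  exact integral_mono (hb.sub hs).pos_part (hbuyer.add hseller)
    fun ω => max_sub_zero_le_add (vs ω) (vb ω) p

end Integral

theorem mcafee_gain_from_trade_general
    {Ω : Type*} [MeasurableSpace Ω] (μ : Measure Ω) [IsProbabilityMeasure μ]
    (vs vb : Ω → ℝ) (Ms Mb : ℝ)
    (hindep : IndepFun vs vb μ)
    (hs_int : Integrable vs μ) (hb_int : Integrable vb μ)
    (hmeds_le : μ {ω | vs ω ≤ Ms} = 1 / 2)
    (hmedb_ge : μ {ω | Mb ≤ vb ω} = 1 / 2)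
    (hMbMs : Ms ≤ Mb) :
    (1 / 2) * ∫ ω, max (vb ω - vs ω) 0 ∂μ
      ≤ ∫ ω in {ω | vs ω ≤ Ms ∧ Ms ≤ vb ω}, (vb ω - vs ω) ∂μ := by
  have hseller_median : μ.real {ω | vs ω ≤ Ms} = 1 / 2 := by simp [measureReal_def, hmeds_le]
  have hbuyer_above : 1 / 2 ≤ μ.real {ω | Ms ≤ vb ω} :=
    calc (1 / 2 : ℝ) = μ.real {ω | Mb ≤ vb ω} := by simp [measureReal_def, hmedb_ge]
      _ ≤ μ.real {ω | Ms ≤ vb ω} := measureReal_mono fun ω hω => hMbMs.trans hω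
  have hbuyer_gain : ∫ ω in {ω | vs ω ≤ Ms}, max (vb ω - Ms) 0 ∂μ
      = μ.real {ω | vs ω ≤ Ms} * ∫ ω, max (vb ω - Ms) 0 ∂μ :=
    hindep.setIntegral_preimage_eq_measureReal_mul hs_int.aemeasurable hb_int.aemeasurable
      measurableSet_Iic (by fun_prop : Measurable fun y : ℝ => max (y - Ms) 0).aestronglyMeasurable
  have hseller_gain : ∫ ω in {ω | Ms ≤ vb ω}, max (Ms - vs ω) 0 ∂μ
      = μ.real {ω | Ms ≤ vb ω} * ∫ ω, max (Ms - vs ω) 0 ∂μ :=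
    hindep.symm.setIntegral_preimage_eq_measureReal_mul hb_int.aemeasurable hs_int.aemeasurable
      measurableSet_Ici (by fun_prop : Measurable fun x : ℝ => max (Ms - x) 0).aestronglyMeasurable
  rw [setIntegral_trade_gain_eq hs_int hb_int Ms, hbuyer_gain, hseller_gain, hseller_median]
  calc (1 / 2) * ∫ ω, max (vb ω - vs ω) 0 ∂μ
      ≤ 1 / 2 * ∫ ω, max (vb ω - Ms) 0 ∂μ + 1 / 2 * ∫ ω, max (Ms - vs ω) 0 ∂μ := by
        rw [← mul_add]
        gcongr
        exact integral_max_sub_le_add hs_int hb_int Ms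
    _ ≤ _ := by gcongr

/-- McAfee's gain-from-trade theorem: if the buyer's median `Mb` is at least the
seller's median `Ms`, then setting the trade price `Ms` achieves in expectation at
least half of the optimal expected gain from trade `E[max(v_b - v_s, 0)]`. -/
theorem mcafee_gain_from_trade
    {Ω : Type*} [MeasurableSpace Ω] (μ : Measure Ω) [IsProbabilityMeasure μ]
    (vs vb : Ω → ℝ) (Ms Mb : ℝ)
    (hmeas_s : Measurable vs) (hmeas_b : Measurable vb)
    (hindep : IndepFun vs vb μ)
    (hs_nonneg : ∀ ω, 0 ≤ vs ω) (hb_nonneg : ∀ ω, 0 ≤ vb ω)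
    (hs_int : Integrable vs μ) (hb_int : Integrable vb μ)
    (hmeds_le : μ {ω | vs ω ≤ Ms} = 1 / 2)
    (hmeds_ge : μ {ω | Ms ≤ vs ω} = 1 / 2)
    (hmedb_le : μ {ω | vb ω ≤ Mb} = 1 / 2)
    (hmedb_ge : μ {ω | Mb ≤ vb ω} = 1 / 2)
    (hMbMs : Ms ≤ Mb) :
    (1 / 2) * ∫ ω, max (vb ω - vs ω) 0 ∂μ
      ≤ ∫ ω in {ω | vs ω ≤ Ms ∧ Ms ≤ vb ω}, (vb ω - vs ω) ∂μ :=
  mcafee_gain_from_trade_general μ vs vb Ms Mb hindep hs_int hb_int hmeds_le hmedb_ge hMbMs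
end

section
/- Let v_s be exponentially distributed with rate 1 and v_b exponentially distributed with rate 1/2, independent. Then E[max(v_s, v_b)] = 7/3, and for every trade price p ∈ ℝ, 1.12·E[W_p] ≤ E[max(v_s, v_b)]; hence no fixed-price mechanism achieves an approximation ratio better than 1.12 to the optimal welfare in this instance. -/
/-!
Splitting the welfare at price `p` as
`v_s + 1{v_s ≤ p} · v_b 1{v_b ≥ p} - v_s 1{v_s ≤ p} · 1{v_b ≥ p}`, independence factorises both
products, and for the two exponential laws `E[W_p] = 1 + e^{-p/2} (p + 1 - e^{-p})` when `p ≥ 0`;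
for `p < 0` trade never happens and `E[W_p] = E[v_s] = 1`. Writing `max = v_s + v_b - min` with
`P(min > t) = e^{-t} e^{-t/2}` gives `E[max] = 1 + 2 - 2/3 = 7/3`. As `(7/3) / 1.12 = 1 + 13/12`,
the ratio bound reduces to `p + 1 - e^{-p} ≤ (13/12) e^{p/2}`, which follows from tangent-line
lower bounds for `exp`.
-/

open MeasureTheory ProbabilityTheory Real Set Filter Topology

section ExponentialIntegrals

variable {c : ℝ}

lemma integral_Ioi_mul_exp_neg_mul (hc : 0 < c) (a : ℝ) :
    ∫ x in Ioi a, c * exp (-(c * x)) = exp (-(c * a)) := by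
  have h := integral_exp_mul_Ioi (neg_lt_zero.mpr hc) a
  simp only [neg_mul] at h
  rw [integral_const_mul, h]
  field_simp

lemma hasDerivAt_neg_add_inv_mul_exp_neg_mul (hc : 0 < c) (x : ℝ) :
    HasDerivAt (fun x ↦ -(x + c⁻¹) * exp (-(c * x))) (x * (c * exp (-(c * x)))) x := by
  have hlin : HasDerivAt (fun x ↦ -(x + c⁻¹)) (-1) x := ((hasDerivAt_id' x).add_const _).neg
  have hexp : HasDerivAt (fun x ↦ exp (-(c * x))) (exp (-(c * x)) * -(c * 1)) x :=
    ((hasDerivAt_id' x).const_mul c).neg.exp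
  refine (hlin.mul hexp).congr_deriv ?_
  field_simp
  ring

lemma tendsto_neg_add_inv_mul_exp_neg_mul (hc : 0 < c) :
    Tendsto (fun x ↦ -(x + c⁻¹) * exp (-(c * x))) atTop (𝓝 0) := by
  have h1 := tendsto_rpow_mul_exp_neg_mul_atTop_nhds_zero 1 c hc
  have h0 := tendsto_rpow_mul_exp_neg_mul_atTop_nhds_zero 0 c hc
  have := (h1.add (h0.const_mul c⁻¹)).neg
  simp only [rpow_one, rpow_zero, neg_mul, mul_zero, add_zero, neg_zero] at this
  refine this.congr fun x ↦ ?_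
  ring

lemma integral_Ioi_id_mul_exp_neg_mul (hc : 0 < c) {a : ℝ} (ha : 0 ≤ a) :
    ∫ x in Ioi a, x * (c * exp (-(c * x))) = (a + c⁻¹) * exp (-(c * a)) := by
  rw [integral_Ioi_of_hasDerivAt_of_nonneg (by fun_prop)
    (fun x _ ↦ hasDerivAt_neg_add_inv_mul_exp_neg_mul hc x)
    (fun x hx ↦ by have : 0 ≤ x := ha.trans hx.le; positivity)
    (tendsto_neg_add_inv_mul_exp_neg_mul hc)]
  ring

end ExponentialIntegrals

lemma mul_sub_log_add_one_le_exp {b : ℝ} (hb : 0 < b) (x : ℝ) : b * (x - log b + 1) ≤ exp x :=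
  calc b * (x - log b + 1) ≤ b * exp (x - log b) := by gcongr; exact add_one_le_exp _
    _ = exp x := by rw [exp_sub, exp_log hb]; field_simp

lemma log_nine_div_four_lt : log (9 / 4) < 0.812 := by
  rw [log_lt_iff_lt_exp (by norm_num)]
  refine lt_of_lt_of_le ?_ (sum_le_exp_of_nonneg (by norm_num) 6)
  simp only [Finset.sum_range_succ, Finset.sum_range_zero, Nat.factorial]
  norm_num

/-- The maximum of `e^{-p/2} (p + 1 - e^{-p})` is about `1.0775`, attained near `p = 1.6`; on each
side of `3/2` we bound `e^{p/2}` and `e^{-p}` below by their tangent lines at `p = 2 log b`. -/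
lemma add_one_sub_exp_neg_le (p : ℝ) : p + 1 - exp (-p) ≤ 13 / 12 * exp (p / 2) := by
  rcases le_or_gt p (3 / 2) with hp | hp
  · have hhalf := mul_sub_log_add_one_le_exp two_pos (p / 2)
    have hneg := mul_sub_log_add_one_le_exp (b := (2 ^ 2)⁻¹) (by norm_num) (-p)
    rw [log_inv, log_pow] at hneg
    norm_num at hneg
    linarith [log_two_lt_d9]
  · have hhalf := mul_sub_log_add_one_le_exp (b := 9 / 4) (by norm_num) (p / 2)
    have hneg := mul_sub_log_add_one_le_exp (b := ((9 / 4) ^ 2)⁻¹) (by norm_num) (-p)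
    rw [log_inv, log_pow] at hneg
    norm_num at hneg
    linarith [log_nine_div_four_lt]

lemma exp_neg_half_mul_add_one_sub_exp_neg_le (p : ℝ) :
    exp (-(p / 2)) * (p + 1 - exp (-p)) ≤ 13 / 12 :=
  calc exp (-(p / 2)) * (p + 1 - exp (-p)) ≤ exp (-(p / 2)) * (13 / 12 * exp (p / 2)) := by
        gcongr
        exact add_one_sub_exp_neg_le p
    _ = 13 / 12 := by rw [mul_left_comm, ← exp_add]; simp

section IndependentValues

variable {Ω : Type*} [MeasurableSpace Ω] {μ : Measure Ω} {X Y : Ω → ℝ}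

lemma MeasureTheory.Integrable.indicator_comp (hX : Measurable X) {s : Set ℝ}
    (hs : MeasurableSet s) {f : ℝ → ℝ} (hf : Integrable (fun ω ↦ f (X ω)) μ) :
    Integrable (fun ω ↦ s.indicator f (X ω)) μ :=
  (hf.indicator (hX hs)).congr (ae_of_all _ fun _ ↦ (indicator_comp_right X).symm)

lemma MeasureTheory.integral_indicator_comp (hX : Measurable X) {s : Set ℝ}
    (hs : MeasurableSet s) {f : ℝ → ℝ} (hf : Measurable f) :
    ∫ ω, s.indicator f (X ω) ∂μ = ∫ x in s, f x ∂μ.map X := by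
  rw [← integral_indicator hs, integral_map hX.aemeasurable (hf.indicator hs).aestronglyMeasurable]

lemma ProbabilityTheory.IndepFun.integral_fixedPriceWelfare [IsFiniteMeasure μ] (hX : Measurable X)
    (hY : Measurable Y) (hXY : IndepFun X Y μ) (hXi : Integrable X μ) (hYi : Integrable Y μ)
    (p : ℝ) :
    ∫ ω, (if X ω ≤ p ∧ p ≤ Y ω then Y ω else X ω) ∂μ =
      ∫ ω, X ω ∂μ + (μ.map X).real (Iic p) * ∫ y in Ici p, y ∂μ.map Y
        - (∫ x in Iic p, x ∂μ.map X) * (μ.map Y).real (Ici p) := by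
  have hW : ∀ ω, (if X ω ≤ p ∧ p ≤ Y ω then Y ω else X ω) =
      X ω + (Iic p).indicator 1 (X ω) * (Ici p).indicator id (Y ω)
        - (Iic p).indicator id (X ω) * (Ici p).indicator 1 (Y ω) := by
    intro ω
    by_cases hx : X ω ≤ p <;> by_cases hy : p ≤ Y ω <;> simp [hx, hy]
  have hXone : Measurable ((Iic p).indicator (1 : ℝ → ℝ)) :=
    measurable_one.indicator measurableSet_Iic
  have hXid : Measurable ((Iic p).indicator (id : ℝ → ℝ)) :=
    measurable_id.indicator measurableSet_Iic
  have hYone : Measurable ((Ici p).indicator (1 : ℝ → ℝ)) :=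
    measurable_one.indicator measurableSet_Ici
  have hYid : Measurable ((Ici p).indicator (id : ℝ → ℝ)) :=
    measurable_id.indicator measurableSet_Ici
  have hbuy : Integrable (fun ω ↦ (Iic p).indicator 1 (X ω) * (Ici p).indicator id (Y ω)) μ :=
    (hXY.comp hXone hYid).integrable_mul
      (.indicator_comp hX measurableSet_Iic (f := 1) (integrable_const 1))
      (.indicator_comp hY measurableSet_Ici (f := id) hYi)
  have hsell : Integrable (fun ω ↦ (Iic p).indicator id (X ω) * (Ici p).indicator 1 (Y ω)) μ :=
    (hXY.comp hXid hYone).integrable_mul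
      (.indicator_comp hX measurableSet_Iic (f := id) hXi)
      (.indicator_comp hY measurableSet_Ici (f := 1) (integrable_const 1))
  have hprod {f g : ℝ → ℝ} (hf : Measurable f) (hg : Measurable g) :=
    hXY.integral_fun_comp_mul_comp hX.aemeasurable hY.aemeasurable
      hf.aestronglyMeasurable hg.aestronglyMeasurable
  simp_rw [hW]
  rw [integral_sub (f := fun ω ↦ X ω + _) (hXi.add hbuy) hsell, integral_add hXi hbuy,
    hprod hXone hYid, hprod hXid hYone,
    integral_indicator_comp hX measurableSet_Iic measurable_one,
    integral_indicator_comp hX measurableSet_Iic measurable_id,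
    integral_indicator_comp hY measurableSet_Ici measurable_one,
    integral_indicator_comp hY measurableSet_Ici measurable_id]
  simp

lemma ProbabilityTheory.IndepFun.integral_min_of_nonneg (hX : Measurable X) (hY : Measurable Y)
    (hXY : IndepFun X Y μ) (hXi : Integrable X μ) (hYi : Integrable Y μ)
    (hX0 : ∀ ω, 0 ≤ X ω) (hY0 : ∀ ω, 0 ≤ Y ω) :
    ∫ ω, min (X ω) (Y ω) ∂μ = ∫ t in Ioi 0, (μ.map X).real (Ioi t) * (μ.map Y).real (Ioi t) := by
  have hmin : Integrable (fun ω ↦ min (X ω) (Y ω)) μ := hXi.inf hYi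
  rw [hmin.integral_eq_integral_meas_lt (ae_of_all _ fun ω ↦ le_min (hX0 ω) (hY0 ω))]
  refine setIntegral_congr_fun measurableSet_Ioi fun t _ ↦ ?_
  have hset : {ω | t < min (X ω) (Y ω)} = X ⁻¹' Ioi t ∩ Y ⁻¹' Ioi t := by
    ext ω
    simp
  rw [hset, measureReal_def,
    hXY.measure_inter_preimage_eq_mul _ _ measurableSet_Ioi measurableSet_Ioi,
    ENNReal.toReal_mul, map_measureReal_apply hX measurableSet_Ioi,
    map_measureReal_apply hY measurableSet_Ioi]
  rfl

lemma ProbabilityTheory.IndepFun.integral_max_of_nonneg (hX : Measurable X) (hY : Measurable Y)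
    (hXY : IndepFun X Y μ) (hXi : Integrable X μ) (hYi : Integrable Y μ)
    (hX0 : ∀ ω, 0 ≤ X ω) (hY0 : ∀ ω, 0 ≤ Y ω) :
    ∫ ω, max (X ω) (Y ω) ∂μ = ∫ ω, X ω ∂μ + ∫ ω, Y ω ∂μ
      - ∫ t in Ioi 0, (μ.map X).real (Ioi t) * (μ.map Y).real (Ioi t) := by
  have hmax : ∀ ω, max (X ω) (Y ω) = X ω + Y ω - min (X ω) (Y ω) := fun ω ↦ by
    rw [← min_add_max (X ω)]
    ring
  simp_rw [hmax]
  rw [integral_sub (f := fun ω ↦ X ω + Y ω) (g := fun ω ↦ min (X ω) (Y ω)) (hXi.add hYi)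
    (hXi.inf hYi), integral_add hXi hYi, hXY.integral_min_of_nonneg hX hY hXi hYi hX0 hY0]

end IndependentValues

namespace ProbabilityTheory

instance nullSingletonClass_expMeasure (r : ℝ) : NullSingletonClass (expMeasure r) := by
  unfold expMeasure gammaMeasure
  infer_instance

variable {r : ℝ}

lemma setIntegral_Ioi_expMeasure (hr : 0 ≤ r) {p : ℝ} (hp : 0 ≤ p) (g : ℝ → ℝ) :
    ∫ x in Ioi p, g x ∂expMeasure r = ∫ x in Ioi p, g x * (r * exp (-(r * x))) := by
  have hdens : expMeasure r =
      volume.withDensity fun x ↦ ((exponentialPDFReal r x).toNNReal : ENNReal) := rfl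
  rw [hdens, setIntegral_withDensity_eq_setIntegral_smul
    (measurable_exponentialPDFReal r).real_toNNReal g measurableSet_Ioi]
  refine setIntegral_congr_fun measurableSet_Ioi fun x hx ↦ ?_
  have hx0 : 0 ≤ x := hp.trans hx.le
  have hpdf : 0 ≤ r * exp (-(r * x)) := by positivity
  simp [exponentialPDFReal, gammaPDFReal, hx0, NNReal.smul_def, hpdf, mul_comm]

lemma expMeasure_real_Ioi (hr : 0 < r) {p : ℝ} (hp : 0 ≤ p) :
    (expMeasure r).real (Ioi p) = exp (-(r * p)) := by
  rw [← integral_Ioi_mul_exp_neg_mul hr p]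
  simpa using setIntegral_Ioi_expMeasure hr.le hp fun _ ↦ (1 : ℝ)

lemma expMeasure_real_Iic (hr : 0 < r) {p : ℝ} (hp : 0 ≤ p) :
    (expMeasure r).real (Iic p) = 1 - exp (-(r * p)) := by
  have := isProbabilityMeasure_expMeasure hr
  rw [← compl_Ioi, probReal_compl_eq_one_sub measurableSet_Ioi, expMeasure_real_Ioi hr hp]

lemma expMeasure_real_Ici (hr : 0 < r) {p : ℝ} (hp : 0 ≤ p) :
    (expMeasure r).real (Ici p) = exp (-(r * p)) := by
  rw [← measureReal_congr Ioi_ae_eq_Ici, expMeasure_real_Ioi hr hp]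

lemma setIntegral_Ioi_id_expMeasure (hr : 0 < r) {p : ℝ} (hp : 0 ≤ p) :
    ∫ x in Ioi p, x ∂expMeasure r = (p + r⁻¹) * exp (-(r * p)) := by
  rw [setIntegral_Ioi_expMeasure hr.le hp, integral_Ioi_id_mul_exp_neg_mul hr hp]

lemma setIntegral_Ici_id_expMeasure (hr : 0 < r) {p : ℝ} (hp : 0 ≤ p) :
    ∫ x in Ici p, x ∂expMeasure r = (p + r⁻¹) * exp (-(r * p)) := by
  rw [← setIntegral_congr_set Ioi_ae_eq_Ici, setIntegral_Ioi_id_expMeasure hr hp]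

lemma integral_id_expMeasure (hr : 0 < r) : ∫ x, x ∂expMeasure r = r⁻¹ := by
  have := isProbabilityMeasure_expMeasure hr
  have hIic : (expMeasure r).real (Iic 0) = 0 := by simp [expMeasure_real_Iic hr le_rfl]
  have hIoi : ∀ᵐ x ∂expMeasure r, x ∈ Ioi 0 := by
    rw [ae_iff]
    simpa [measureReal_eq_zero_iff, Iic] using hIic
  rw [← Measure.restrict_eq_self_of_ae_mem hIoi, setIntegral_Ioi_id_expMeasure hr le_rfl]
  simp

lemma setIntegral_Iic_id_expMeasure (hr : 0 < r) {p : ℝ} (hp : 0 ≤ p) :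
    ∫ x in Iic p, x ∂expMeasure r = r⁻¹ - (p + r⁻¹) * exp (-(r * p)) := by
  have hint : Integrable id (expMeasure r) :=
    .of_integral_ne_zero (by simpa [integral_id_expMeasure hr] using hr.ne')
  have := integral_add_compl (measurableSet_Ioi (a := p)) hint
  rw [compl_Ioi] at this
  simp only [id, setIntegral_Ioi_id_expMeasure hr hp, integral_id_expMeasure hr] at this
  linarith

lemma integral_Ioi_expMeasure_real_Ioi_mul {s : ℝ} (hr : 0 < r) (hs : 0 < s) :
    ∫ t in Ioi 0, (expMeasure r).real (Ioi t) * (expMeasure s).real (Ioi t) = (r + s)⁻¹ := by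
  have hrs : 0 < r + s := add_pos hr hs
  rw [setIntegral_congr_fun measurableSet_Ioi (g := fun t ↦ (r + s)⁻¹ * ((r + s) *
    exp (-((r + s) * t)))) fun t ht ↦ by
      rw [expMeasure_real_Ioi hr (le_of_lt ht), expMeasure_real_Ioi hs (le_of_lt ht), ← exp_add]
      field_simp
      ring_nf,
    integral_const_mul, integral_Ioi_mul_exp_neg_mul hrs]
  simp

end ProbabilityTheory

/-- With the seller's value exponentially distributed with rate `1` and the buyer's
value exponentially distributed with rate `1/2` (independent), the optimal expected
welfare is `7/3` and no fixed-price mechanism achieves an approximation ratio better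
than `1.12`. -/
theorem exponential_instance_lower_bound
    {Ω : Type*} [MeasurableSpace Ω] (μ : Measure Ω) [IsProbabilityMeasure μ]
    (vs vb : Ω → ℝ)
    (hmeas_s : Measurable vs) (hmeas_b : Measurable vb)
    (hindep : IndepFun vs vb μ)
    (hs_nonneg : ∀ ω, 0 ≤ vs ω) (hb_nonneg : ∀ ω, 0 ≤ vb ω)
    (hs_int : Integrable vs μ) (hb_int : Integrable vb μ)
    (hs_dist : μ.map vs = expMeasure 1)
    (hb_dist : μ.map vb = expMeasure (1 / 2)) :
    (∫ ω, max (vs ω) (vb ω) ∂μ = 7 / 3) ∧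
      ∀ p : ℝ,
        (1.12 : ℝ) * ∫ ω, (if vs ω ≤ p ∧ p ≤ vb ω then vb ω else vs ω) ∂μ
          ≤ ∫ ω, max (vs ω) (vb ω) ∂μ := by
  have hmean_s : ∫ ω, vs ω ∂μ = 1 := by
    rw [← integral_map (f := fun x ↦ x) hmeas_s.aemeasurable aestronglyMeasurable_id, hs_dist,
      integral_id_expMeasure one_pos, inv_one]
  have hmean_b : ∫ ω, vb ω ∂μ = 2 := by
    rw [← integral_map (f := fun x ↦ x) hmeas_b.aemeasurable aestronglyMeasurable_id, hb_dist,
      integral_id_expMeasure (by norm_num)]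
    norm_num
  have hopt : ∫ ω, max (vs ω) (vb ω) ∂μ = 7 / 3 := by
    rw [hindep.integral_max_of_nonneg hmeas_s hmeas_b hs_int hb_int hs_nonneg hb_nonneg,
      hmean_s, hmean_b, hs_dist, hb_dist, integral_Ioi_expMeasure_real_Ioi_mul one_pos
      (by norm_num)]
    norm_num
  refine ⟨hopt, fun p ↦ ?_⟩
  rw [hopt]
  rcases lt_or_ge p 0 with hp | hp
  · have hno_trade : ∀ ω, ¬(vs ω ≤ p ∧ p ≤ vb ω) := fun ω h ↦ by linarith [hs_nonneg ω, h.1]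
    simp only [hno_trade, if_false, hmean_s]
    norm_num
  · rw [hindep.integral_fixedPriceWelfare hmeas_s hmeas_b hs_int hb_int, hmean_s, hs_dist, hb_dist,
      expMeasure_real_Iic one_pos hp, setIntegral_Ici_id_expMeasure (by norm_num) hp,
      setIntegral_Iic_id_expMeasure one_pos hp, expMeasure_real_Ici (by norm_num) hp]
    have hexp : exp (-(1 / 2 * p)) = exp (-(p / 2)) := by ring_nf
    rw [one_mul, hexp]
    linear_combination (1.12 : ℝ) * exp_neg_half_mul_add_one_sub_exp_neg_le p
end

section
/- (Revenue of the global-reserve affine maximizer) Let A* be an allocation maximizing the adjusted welfare W_r over all allocations, and let n* = n_{A*} ≥ 1. For each bidder i with A*_i ≠ ∅ define the VCG payment p_i = max{ Σ_{j≠i} v_j(A'_j) − H_{n_{A'}}·r : A' an allocation with A'_i = ∅ } − ( Σ_{j≠i} v_j(A*_j) − H_{n*}·r ). Then p_i ≥ r / n* for every bidder i with A*_i ≠ ∅, and consequently the total revenue satisfies Σ_{i : A*_i ≠ ∅} p_i ≥ r. -/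
/-!
Withdrawing a winner's bundle from `A*` gives an allocation that is feasible in her absence:
it leaves the other bidders' values unchanged and lowers the penalty from `H_{n*} r` to
`H_{n*-1} r`, that is, by `r / n*`. So every winner pays at least `r / n*`, and the `n*`
winners together pay at least `r`.
-/

open Finset

/-- An allocation assigns pairwise disjoint bundles of items to the bidders. -/
def IsAlloc {ι α : Type*} (A : ι → Finset α) : Prop :=
  Pairwise fun i j => Disjoint (A i) (A j)

/-- `numNonempty A` is the number of bidders receiving a nonempty bundle in `A`. -/
def numNonempty {ι α : Type*} [Fintype ι] [DecidableEq α] (A : ι → Finset α) : ℕ :=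
  (Finset.univ.filter fun i => A i ≠ ∅).card

/-- The `k`-th harmonic number `H_k = ∑_{j=1}^k 1/j`, as a real number. -/
noncomputable def harmonicR (k : ℕ) : ℝ :=
  ∑ j ∈ Finset.range k, (1 : ℝ) / (j + 1)

/-- The welfare of an allocation `A`, adjusted by the global reserve `r`:
`W_r(A) = ∑ᵢ vᵢ(Aᵢ) - H_{n_A}·r`. -/
noncomputable def adjWelfare {ι α : Type*} [Fintype ι] [DecidableEq α]
    (v : ι → Finset α → ℝ) (r : ℝ) (A : ι → Finset α) : ℝ :=
  (∑ i, v i (A i)) - harmonicR (numNonempty A) * r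

theorem harmonicR_succ (k : ℕ) : harmonicR (k + 1) = harmonicR k + 1 / (k + 1 : ℝ) := by
  rw [harmonicR, harmonicR, sum_range_succ]

section Allocation

variable {ι α : Type*} [DecidableEq ι]

theorem IsAlloc.update_empty {A : ι → Finset α} (hA : IsAlloc A) (i : ι) :
    IsAlloc (Function.update A i ∅) := by
  intro a b hab
  rcases eq_or_ne a i with rfl | ha
  · simp
  rcases eq_or_ne b i with rfl | hb
  · simp
  simpa [Function.update_of_ne ha, Function.update_of_ne hb] using hA hab

theorem numNonempty_update_empty_add_one [Fintype ι] [DecidableEq α] {A : ι → Finset α} {i : ι}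
    (hi : A i ≠ ∅) : numNonempty (Function.update A i ∅) + 1 = numNonempty A := by
  have hfilter : univ.filter (fun j => Function.update A i ∅ j ≠ ∅)
      = (univ.filter fun j => A j ≠ ∅).erase i := by
    ext j
    rcases eq_or_ne j i with rfl | hj <;> simp [*]
  rw [numNonempty, numNonempty, hfilter, card_erase_add_one (by simpa using hi)]

theorem sum_erase_update_self [Fintype ι] {β : Type*} [AddCommMonoid β]
    (f : ι → Finset α → β) (A : ι → Finset α) (i : ι) (S : Finset α) :
    ∑ j ∈ univ.erase i, f j (Function.update A i S j) = ∑ j ∈ univ.erase i, f j (A j) :=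
  sum_congr rfl fun _ hj => by rw [Function.update_of_ne (ne_of_mem_erase hj)]

theorem div_numNonempty_le_payment [Fintype ι] [DecidableEq α] (v : ι → Finset α → ℝ) (r : ℝ)
    {Astar : ι → Finset α} (hAstar : IsAlloc Astar) {i : ι} (hi : Astar i ≠ ∅) {pᵢ : ℝ}
    (hp : IsGreatest
        {w : ℝ | ∃ A : ι → Finset α, IsAlloc A ∧ A i = ∅ ∧
          w = (∑ j ∈ univ.erase i, v j (A j)) - harmonicR (numNonempty A) * r}
        (pᵢ + ((∑ j ∈ univ.erase i, v j (Astar j)) - harmonicR (numNonempty Astar) * r))) :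
    r / (numNonempty Astar : ℝ) ≤ pᵢ := by
  have hbound := hp.2 ⟨Function.update Astar i ∅, hAstar.update_empty i, by simp, rfl⟩
  rw [sum_erase_update_self, ← numNonempty_update_empty_add_one hi, harmonicR_succ] at hbound
  rw [← numNonempty_update_empty_add_one hi]
  push_cast
  linarith [one_div_mul_eq_div ((numNonempty (Function.update Astar i ∅) : ℝ) + 1) r]

end Allocation

theorem global_reserve_revenue_general
    {ι α : Type*} [Fintype ι] [DecidableEq ι] [DecidableEq α]
    (v : ι → Finset α → ℝ)
    (r : ℝ)
    (Astar : ι → Finset α) (hAstar : IsAlloc Astar)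
    (hnonempty : 1 ≤ numNonempty Astar)
    (p : ι → ℝ)
    (hp : ∀ i, Astar i ≠ ∅ →
      IsGreatest
        {w : ℝ | ∃ A : ι → Finset α, IsAlloc A ∧ A i = ∅ ∧
          w = (∑ j ∈ Finset.univ.erase i, v j (A j)) - harmonicR (numNonempty A) * r}
        (p i + ((∑ j ∈ Finset.univ.erase i, v j (Astar j))
          - harmonicR (numNonempty Astar) * r))) :
    (∀ i, Astar i ≠ ∅ → r / (numNonempty Astar : ℝ) ≤ p i) ∧
      r ≤ ∑ i ∈ Finset.univ.filter (fun i => Astar i ≠ ∅), p i := by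
  have hpayment : ∀ i, Astar i ≠ ∅ → r / (numNonempty Astar : ℝ) ≤ p i :=
    fun i hi => div_numNonempty_le_payment v r hAstar hi (hp i hi)
  refine ⟨hpayment, ?_⟩
  have hn : (numNonempty Astar : ℝ) ≠ 0 := Nat.cast_ne_zero.mpr (by omega)
  calc r = numNonempty Astar • (r / (numNonempty Astar : ℝ)) := by
        rw [nsmul_eq_mul, mul_div_cancel₀ r hn]
    _ ≤ ∑ i ∈ univ.filter (fun i => Astar i ≠ ∅), p i :=
        card_nsmul_le_sum _ _ _ fun i hi => hpayment i (mem_filter.mp hi).2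

/-- Revenue of the global-reserve affine maximizer: if `Astar` maximizes the adjusted
welfare `W_r` over all allocations and allocates a nonempty bundle to at least one
bidder, then the VCG payment of every bidder receiving a nonempty bundle is at least
`r / n*` (where `n* = n_{Astar}`), and hence the total revenue is at least `r`. -/
theorem global_reserve_revenue
    {ι α : Type*} [Fintype ι] [DecidableEq ι] [Fintype α] [DecidableEq α]
    (v : ι → Finset α → ℝ)
    (hv0 : ∀ i, v i ∅ = 0)
    (hmono : ∀ i, ∀ S T : Finset α, S ⊆ T → v i S ≤ v i T)
    (r : ℝ) (hr : 0 ≤ r)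
    (Astar : ι → Finset α) (hAstar : IsAlloc Astar)
    (hopt : ∀ A : ι → Finset α, IsAlloc A → adjWelfare v r A ≤ adjWelfare v r Astar)
    (hnonempty : 1 ≤ numNonempty Astar)
    (p : ι → ℝ)
    (hp : ∀ i, Astar i ≠ ∅ →
      IsGreatest
        {w : ℝ | ∃ A : ι → Finset α, IsAlloc A ∧ A i = ∅ ∧
          w = (∑ j ∈ Finset.univ.erase i, v j (A j)) - harmonicR (numNonempty A) * r}
        (p i + ((∑ j ∈ Finset.univ.erase i, v j (Astar j))
          - harmonicR (numNonempty Astar) * r))) :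
    (∀ i, Astar i ≠ ∅ → r / (numNonempty Astar : ℝ) ≤ p i) ∧
      r ≤ ∑ i ∈ Finset.univ.filter (fun i => Astar i ≠ ∅), p i :=
  global_reserve_revenue_general v r Astar hAstar hnonempty p hp
end

section
/- (Subadditive valuations and random subsets) Let S be a finite set and let v be a real-valued function on subsets of S that is subadditive, i.e., v(A ∪ B) ≤ v(A) + v(B) for all A, B ⊆ S. Let R be a random subset of S obtained by including each element of S independently with probability 1/2. Then E[v(R)] ≥ v(S)/2. -/
/-!
Every `R ⊆ S` pairs with its complement `S \ R`, and subadditivity gives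
`v S ≤ v R + v (S \ R)`. Complementation permutes the subsets of `S`, so averaging this
inequality over all `R` gives `v S ≤ 2 E[v R]`.
-/

open Finset

theorem sum_powerset_sdiff {α M : Type*} [DecidableEq α] [AddCommMonoid M]
    (S : Finset α) (f : Finset α → M) :
    ∑ R ∈ S.powerset, f (S \ R) = ∑ R ∈ S.powerset, f R :=
  sum_nbij' (S \ ·) (S \ ·) (fun _ _ ↦ mem_powerset.2 sdiff_subset)
    (fun _ _ ↦ mem_powerset.2 sdiff_subset)
    (fun _ hR ↦ Finset.sdiff_sdiff_eq_self (mem_powerset.1 hR))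
    (fun _ hR ↦ Finset.sdiff_sdiff_eq_self (mem_powerset.1 hR)) fun _ _ ↦ rfl

theorem two_pow_card_mul_le_two_mul_sum_powerset {α : Type*} [DecidableEq α]
    (S : Finset α) (v : Finset α → ℝ) (hv : ∀ R ⊆ S, v S ≤ v R + v (S \ R)) :
    2 ^ #S * v S ≤ 2 * ∑ R ∈ S.powerset, v R :=
  calc 2 ^ #S * v S = ∑ _R ∈ S.powerset, v S := by simp [card_powerset]
    _ ≤ ∑ R ∈ S.powerset, (v R + v (S \ R)) :=
      sum_le_sum fun R hR ↦ hv R (mem_powerset.1 hR)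
    _ = 2 * ∑ R ∈ S.powerset, v R := by
      rw [sum_add_distrib, sum_powerset_sdiff]; ring

/-- If `v` is a subadditive set function on the subsets of a finite set `S`, and `R`
is a uniformly random subset of `S` (each element being included independently with
probability `1/2`), then `E[v(R)] ≥ v(S)/2`. The expectation is written out as the
average of `v` over all `2^|S|` subsets of `S`. -/
theorem subadditive_random_subset {α : Type*} [DecidableEq α]
    (S : Finset α) (v : Finset α → ℝ)
    (hsub : ∀ A B : Finset α, A ⊆ S → B ⊆ S → v (A ∪ B) ≤ v A + v B) :
    v S / 2 ≤ (∑ R ∈ S.powerset, v R) / 2 ^ S.card := by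
  have hcompl : ∀ R ⊆ S, v S ≤ v R + v (S \ R) := fun R hR ↦ by
    simpa [union_sdiff_of_subset hR] using hsub R (S \ R) hR sdiff_subset
  rw [div_le_div_iff₀ two_pos (by positivity)]
  linarith [two_pow_card_mul_le_two_mul_sum_powerset S v hcompl]
end

section
/- (Buyers' welfare in the Arrow-Debreu VCG step with a dummy bidder) Let N be a finite set of buyers, where each i ∈ N has a valuation v_i : [0,1] → ℝ that is nondecreasing, concave, and satisfies v_i(0) = 0, and let p ≥ 0 be a price per unit. Suppose the nonnegative reals (s_i)_{i∈N} together with s_d ≥ 0 satisfy Σ_{i∈N} s_i + s_d ≤ 1/8 and maximize Σ_{i∈N} v_i(s_i) + p·s_d over all such vectors. Then for every nonnegative (o_i)_{i∈N} with Σ_{i∈N} o_i ≤ 1, we have Σ_{i∈N} v_i(s_i) ≥ (1/8)·Σ_{i∈N} v_i(o_i) − p/8. -/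
open Finset

theorem ConcaveOn.smul_le_map_smul {𝕜 E β : Type*} [Ring 𝕜] [PartialOrder 𝕜]
    [IsOrderedAddMonoid 𝕜] [AddCommMonoid E] [Module 𝕜 E]
    [AddCommMonoid β] [PartialOrder β] [Module 𝕜 β]
    {s : Set E} {f : E → β} (hf : ConcaveOn 𝕜 s f) (h0 : (0 : E) ∈ s) (hf0 : f 0 = 0)
    {x : E} (hx : x ∈ s) {t : 𝕜} (ht0 : 0 ≤ t) (ht1 : t ≤ 1) :
    t • f x ≤ f (t • x) := by
  simpa only [hf0, smul_zero, add_zero] using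
    hf.2 hx h0 ht0 (sub_nonneg.2 ht1) (add_sub_cancel t 1)

theorem arrow_debreu_vcg_buyers_welfare_general
    {ι : Type*} [Fintype ι]
    (v : ι → ℝ → ℝ)
    (hzero : ∀ i, v i 0 = 0)
    (hconc : ∀ i, ConcaveOn ℝ (Set.Icc (0 : ℝ) 1) (v i))
    (p : ℝ) (hp : 0 ≤ p)
    (s : ι → ℝ) (sd : ℝ)
    (hs_nonneg : ∀ i, 0 ≤ s i)
    (hs_sum : ∑ i, s i + sd ≤ 1 / 8)
    (hopt : ∀ (s' : ι → ℝ) (sd' : ℝ), (∀ i, 0 ≤ s' i) → 0 ≤ sd' →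
      ∑ i, s' i + sd' ≤ 1 / 8 →
      ∑ i, v i (s' i) + p * sd' ≤ ∑ i, v i (s i) + p * sd) :
    ∀ o : ι → ℝ, (∀ i, 0 ≤ o i) → ∑ i, o i ≤ 1 →
      (1 / 8) * ∑ i, v i (o i) - p / 8 ≤ ∑ i, v i (s i) := by
  intro o ho_nonneg ho_sum
  have ho_mem (i : ι) : o i ∈ Set.Icc (0 : ℝ) 1 :=
    ⟨ho_nonneg i, (single_le_sum (fun j _ => ho_nonneg j) (mem_univ i)).trans ho_sum⟩
  have hscaled : (1 / 8) * ∑ i, v i (o i) ≤ ∑ i, v i ((1 / 8) * o i) := by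
    rw [mul_sum]
    exact sum_le_sum fun i _ => (hconc i).smul_le_map_smul ⟨le_rfl, zero_le_one⟩ (hzero i)
      (ho_mem i) (by norm_num) (by norm_num)
  have hbuyers := hopt (fun i => (1 / 8) * o i) 0
    (fun i => mul_nonneg (by norm_num) (ho_nonneg i)) le_rfl (by rw [← mul_sum]; linarith)
  have hdummy : p * sd ≤ p / 8 := by
    have : sd ≤ 1 / 8 := by linarith [sum_nonneg fun i (_ : i ∈ univ) => hs_nonneg i]
    nlinarith
  linarith

/-- Buyers' welfare in the Arrow-Debreu VCG step with a dummy bidder: if the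
nonnegative amounts `(s i)` for the buyers together with the dummy amount `sd` sum to
at most `1/8` and maximize `∑ i, v i (s i) + p·sd` over all such vectors, then for
every feasible allocation `(o i)` (nonnegative, summing to at most `1`) we have
`∑ i, v i (s i) ≥ (1/8)·∑ i, v i (o i) - p/8`. -/
theorem arrow_debreu_vcg_buyers_welfare
    {ι : Type*} [Fintype ι]
    (v : ι → ℝ → ℝ)
    (hzero : ∀ i, v i 0 = 0)
    (hmono : ∀ i, MonotoneOn (v i) (Set.Icc (0 : ℝ) 1))
    (hconc : ∀ i, ConcaveOn ℝ (Set.Icc (0 : ℝ) 1) (v i))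
    (p : ℝ) (hp : 0 ≤ p)
    (s : ι → ℝ) (sd : ℝ)
    (hs_nonneg : ∀ i, 0 ≤ s i) (hsd_nonneg : 0 ≤ sd)
    (hs_sum : ∑ i, s i + sd ≤ 1 / 8)
    (hopt : ∀ (s' : ι → ℝ) (sd' : ℝ), (∀ i, 0 ≤ s' i) → 0 ≤ sd' →
      ∑ i, s' i + sd' ≤ 1 / 8 →
      ∑ i, v i (s' i) + p * sd' ≤ ∑ i, v i (s i) + p * sd) :
    ∀ o : ι → ℝ, (∀ i, 0 ≤ o i) → ∑ i, o i ≤ 1 →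
      (1 / 8) * ∑ i, v i (o i) - p / 8 ≤ ∑ i, v i (s i) :=
  arrow_debreu_vcg_buyers_welfare_general v hzero hconc p hp s sd hs_nonneg hs_sum hopt
end

section
/- (Existence of three substantial groups) Let N be a finite set and r : N → ℝ with r_i ≥ 0 for all i and Σ_{i∈N} r_i = 1. Suppose there is i₀ ∈ N with r_{i₀} ≤ 1/3 and r_i ≤ 1/8 for every i ≠ i₀. Then there exist disjoint subsets T₁, T₂ ⊆ N \ {i₀} such that 1/4 ≤ Σ_{i∈T_l} r_i ≤ 3/8 for l = 1, 2, and Σ_{i ∈ N \ (T₁ ∪ T₂)} r_i ≥ 1/4; in particular, N is partitioned into three groups each holding at least 1/4 of the good. -/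
/-!
The agents other than `i₀` hold at least `2/3`, each at most `1/8`; discarding them one at a
time from a set holding at least `1/4` stops at a group holding between `1/4` and `3/8`. Doing
this twice leaves `2/3 - 3/8 ≥ 1/4` available for the second group, and at least `1 - 3/4` outside
both groups.
-/

open Finset

theorem Finset.exists_subset_sum_mem_Icc {ι M : Type*} [DecidableEq ι] [AddCommGroup M]
    [LinearOrder M] [IsOrderedAddMonoid M] {r : ι → M} {a b : M} (hab : 0 ≤ a + b)
    (S : Finset ι) (hS : ∀ i ∈ S, r i ≤ b) (ha : a ≤ ∑ i ∈ S, r i) :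
    ∃ T ⊆ S, ∑ i ∈ T, r i ∈ Set.Icc a (a + b) := by
  induction S using Finset.strongInduction with
  | H S ih =>
    by_cases hle : ∑ i ∈ S, r i ≤ a + b
    · exact ⟨S, Subset.rfl, ha, hle⟩
    rcases S.eq_empty_or_nonempty with rfl | ⟨x, hx⟩
    · exact ⟨∅, Subset.rfl, by simpa using ha, by simpa using hab⟩
    have ha' : a ≤ ∑ i ∈ S.erase x, r i := by
      rw [sum_erase_eq_sub hx, le_sub_iff_add_le]
      exact (add_le_add_right (hS x hx) a).trans (not_le.1 hle).le
    obtain ⟨T, hT, hsum⟩ :=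
      ih (S.erase x) (erase_ssubset hx) (fun i hi => hS i (mem_of_mem_erase hi)) ha'
    exact ⟨T, hT.trans (erase_subset x S), hsum⟩

theorem exists_three_substantial_groups_general
    {ι : Type*} [Fintype ι] [DecidableEq ι]
    (r : ι → ℝ) (hr_sum : ∑ i, r i = 1)
    (i₀ : ι) (hi₀ : r i₀ ≤ 1 / 3)
    (hsmall : ∀ i, i ≠ i₀ → r i ≤ 1 / 8) :
    ∃ T₁ T₂ : Finset ι, Disjoint T₁ T₂ ∧ i₀ ∉ T₁ ∧ i₀ ∉ T₂ ∧
      (1 / 4 ≤ ∑ i ∈ T₁, r i ∧ ∑ i ∈ T₁, r i ≤ 3 / 8) ∧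
      (1 / 4 ≤ ∑ i ∈ T₂, r i ∧ ∑ i ∈ T₂, r i ≤ 3 / 8) ∧
      1 / 4 ≤ ∑ i ∈ Finset.univ \ (T₁ ∪ T₂), r i := by
  set S := univ.erase i₀
  have hS : ∑ i ∈ S, r i = 1 - r i₀ := by rw [sum_erase_eq_sub (mem_univ i₀), hr_sum]
  have hS_small : ∀ i ∈ S, r i ≤ 1 / 8 := fun i hi => hsmall i (ne_of_mem_erase hi)
  have hab : (0 : ℝ) ≤ 1 / 4 + 1 / 8 := by norm_num
  obtain ⟨T₁, hT₁, h₁, h₁'⟩ := exists_subset_sum_mem_Icc hab S hS_small (by linarith)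
  obtain ⟨T₂, hT₂, h₂, h₂'⟩ := exists_subset_sum_mem_Icc hab (S \ T₁)
    (fun i hi => hS_small i (mem_sdiff.1 hi).1)
    (by rw [sum_sdiff_eq_sub hT₁, hS]; linarith)
  have hdisj : Disjoint T₁ T₂ := disjoint_of_subset_right hT₂ disjoint_sdiff
  have hrest : ∑ i ∈ univ \ (T₁ ∪ T₂), r i = 1 - ∑ i ∈ T₁, r i - ∑ i ∈ T₂, r i := by
    rw [sum_sdiff_eq_sub (subset_univ _), hr_sum, sum_union hdisj, sub_add_eq_sub_sub]
  refine ⟨T₁, T₂, hdisj, fun h => notMem_erase i₀ univ (hT₁ h),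
    fun h => notMem_erase i₀ univ (sdiff_subset (hT₂ h)),
    ⟨h₁, by linarith⟩, ⟨h₂, by linarith⟩, ?_⟩
  rw [hrest]
  linarith

/-- Existence of three substantial groups: if the endowments `r i ≥ 0` sum to `1`,
one distinguished agent `i₀` has `r i₀ ≤ 1/3`, and every other agent has `r i ≤ 1/8`,
then there are disjoint groups `T₁, T₂` avoiding `i₀` whose endowments sum to between
`1/4` and `3/8` each, and the remaining agents hold at least `1/4` of the good. -/
theorem exists_three_substantial_groups
    {ι : Type*} [Fintype ι] [DecidableEq ι]
    (r : ι → ℝ) (hr_nonneg : ∀ i, 0 ≤ r i) (hr_sum : ∑ i, r i = 1)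
    (i₀ : ι) (hi₀ : r i₀ ≤ 1 / 3)
    (hsmall : ∀ i, i ≠ i₀ → r i ≤ 1 / 8) :
    ∃ T₁ T₂ : Finset ι, Disjoint T₁ T₂ ∧ i₀ ∉ T₁ ∧ i₀ ∉ T₂ ∧
      (1 / 4 ≤ ∑ i ∈ T₁, r i ∧ ∑ i ∈ T₁, r i ≤ 3 / 8) ∧
      (1 / 4 ≤ ∑ i ∈ T₂, r i ∧ ∑ i ∈ T₂, r i ≤ 3 / 8) ∧
      1 / 4 ≤ ∑ i ∈ Finset.univ \ (T₁ ∪ T₂), r i :=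
  exists_three_substantial_groups_general r hr_sum i₀ hi₀ hsmall
end
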